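/- arXiv:2112.09480 — 8 statements merged into one kernel-verified Lean document; each statement's English description precedes it below -/
import Mathlib

section
/- Let A = πC^{1/α}/(2(1/α−1)) and let G(z) = −A/z^{1/α−1} (principal branch on the right half-plane). For every point z = γ_c(s) = s + i c s^{1/α} with |c| ≤ C^{-1/α} and s > 0, the imaginary part of G(z) satisfies |Im G(z)| ≤ π/2. -/
/-- `G(z) = -A z^{-(1/α-1)}`, principal branch of the power function. -/
noncomputable def Gmap (A α : ℝ) (z : ℂ) : ℂ :=
  -(A : ℂ) * z ^ (-((1 / α - 1 : ℝ) : ℂ))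

lemma abs_le_abs_tan {x : ℝ} (h : |x| < Real.pi / 2) : |x| ≤ |Real.tan x| := by
  rcases le_or_gt 0 x with hx | hx
  · rw [abs_of_nonneg hx] at h ⊢
    exact (Real.le_tan hx h).trans (le_abs_self _)
  · rw [abs_of_neg hx] at h ⊢
    have := Real.le_tan (neg_nonneg.2 hx.le) h
    rw [Real.tan_neg] at this
    exact this.trans (neg_le_abs _)

/-- With `A = πC^(1/α)/(2(1/α-1))`, for every point `γ_c(s) = s + i c s^(1/α)` of the cusp
(i.e. `|c| ≤ C^(-1/α)`, `s > 0`) one has `|Im G(γ_c(s))| ≤ π/2`. -/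
theorem stmt3 (C α c s : ℝ) (hC : 0 < C) (hα0 : 0 < α) (hα1 : α < 1)
    (hc : |c| ≤ C ^ (-(1 / α))) (hs : 0 < s)
    (A : ℝ) (hA : A = Real.pi * C ^ (1 / α) / (2 * (1 / α - 1))) :
    |(Gmap A α ((s : ℂ) + (c * s ^ (1 / α) : ℝ) * Complex.I)).im| ≤ Real.pi / 2 := by
  set β : ℝ := 1 / α - 1 with hβdef
  have hβ : 0 < β := by
    have h1 : 1 < 1 / α := (one_lt_div hα0).2 hα1
    rw [hβdef]; linarith
  set z : ℂ := (s : ℂ) + (c * s ^ (1 / α) : ℝ) * Complex.I with hz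
  have hre : z.re = s := by simp [hz]
  have him : z.im = c * s ^ (1 / α) := by simp [hz]
  have hzre : 0 < z.re := by rw [hre]; exact hs
  have hz0 : z ≠ 0 := by
    intro h; rw [h] at hzre; simp at hzre
  have habs : s ≤ ‖z‖ := hre ▸ (Complex.re_le_norm z)
  have habs0 : 0 < ‖z‖ := lt_of_lt_of_le hs habs
  -- argument bound
  have harg2 : |z.arg| < Real.pi / 2 :=
    Complex.abs_arg_lt_pi_div_two_iff.2 (Or.inl hzre)
  have htan : |Real.tan z.arg| = |c| * s ^ β := by
    rw [Complex.tan_arg, hre, him]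
    rw [mul_div_assoc, abs_mul]
    congr 1
    rw [abs_of_nonneg (by positivity : (0:ℝ) ≤ s ^ (1/α) / s)]
    rw [hβdef, Real.rpow_sub hs, Real.rpow_one]
  have hargle : |z.arg| ≤ |c| * s ^ β := (abs_le_abs_tan harg2).trans_eq htan
  -- compute imaginary part
  have hcast : (-((1 / α - 1 : ℝ) : ℂ)) = ((-β : ℝ) : ℂ) := by
    push_cast [hβdef]; ring
  have hpow : (z ^ (-((1 / α - 1 : ℝ) : ℂ))).im
      = Real.exp (-β * Real.log ‖z‖) * Real.sin (-β * z.arg) := by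
    rw [hcast, Complex.cpow_def_of_ne_zero hz0, Complex.exp_im]
    congr 1
    · congr 1
      simp [Complex.mul_re, Complex.log_re, mul_comm]
    · simp [Complex.mul_im, Complex.log_im, mul_comm]
  have hGim : (Gmap A α z).im
      = -A * (Real.exp (-β * Real.log ‖z‖) * Real.sin (-β * z.arg)) := by
    rw [Gmap]
    rw [show (-(A:ℂ) * z ^ (-((1 / α - 1 : ℝ) : ℂ))).im
        = -A * (z ^ (-((1 / α - 1 : ℝ) : ℂ))).im by
      simp [Complex.mul_im]]
    rw [hpow]
  have hexp : Real.exp (-β * Real.log ‖z‖) = ‖z‖ ^ (-β) := by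
    rw [Real.rpow_def_of_pos habs0, mul_comm]
  have hA0 : 0 ≤ A := by
    rw [hA]
    have : (0:ℝ) < C ^ (1/α) := Real.rpow_pos_of_pos hC _
    have hπ := Real.pi_pos
    positivity
  -- chain of inequalities
  have key : |(Gmap A α z).im| ≤ A * ‖z‖ ^ (-β) * (β * (|c| * s ^ β)) := by
    rw [hGim, hexp, abs_mul, abs_mul, abs_neg, abs_of_nonneg hA0,
      abs_of_nonneg (Real.rpow_nonneg habs0.le _), mul_assoc]
    gcongr
    calc |Real.sin (-β * z.arg)| ≤ |(-β * z.arg)| := Real.abs_sin_le_abs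
      _ = β * |z.arg| := by rw [abs_mul, abs_neg, abs_of_pos hβ]
      _ ≤ β * (|c| * s ^ β) := by gcongr
  have hzb : ‖z‖ ^ (-β) ≤ s ^ (-β) :=
    Real.rpow_le_rpow_of_nonpos hs habs (neg_nonpos.2 hβ.le)
  have key2 : |(Gmap A α z).im| ≤ A * s ^ (-β) * (β * (|c| * s ^ β)) := by
    refine key.trans ?_
    gcongr
  refine key2.trans ?_
  have hsβ : s ^ (-β) * s ^ β = 1 := by
    rw [← Real.rpow_add hs]; simp
  have hCβ : C ^ (1/α) * C ^ (-(1/α)) = 1 := by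
    rw [← Real.rpow_add hC]; simp
  calc A * s ^ (-β) * (β * (|c| * s ^ β))
      ≤ A * s ^ (-β) * (β * (C ^ (-(1/α)) * s ^ β)) := by
        gcongr
    _ = (A * β) * C ^ (-(1/α)) * (s ^ (-β) * s ^ β) := by ring
    _ = (A * β) * C ^ (-(1/α)) := by rw [hsβ, mul_one]
    _ = Real.pi / 2 := by
        rw [hA]
        have hb2 : β / (2 * β) = 1 / 2 := by
          rw [div_eq_iff (by positivity : (2 * β) ≠ 0)]; ring
        calc Real.pi * C ^ (1/α) / (2*β) * β * C ^ (-(1/α))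
            = Real.pi * (C ^ (1/α) * C ^ (-(1/α))) * (β / (2*β)) := by ring
          _ = Real.pi / 2 := by rw [hCβ, hb2]; ring
end

section
/- With c = C^{-1/α} fixed, and θ̃(s) = A sin((1/α−1)θ(s))/r(s)^{1/α−1} the argument of F(γ_c(s)) where F(z)=exp(−A/z^{1/α−1}), one has the asymptotic expansion θ̃(s) = π/2 − A₁ s^{2/α−2} + o(s^{2/α−2}) as s → 0+, for some constant A₁ = A₁(C,α) > 0. -/
open Filter Asymptotics Topology

section Aux

open Real Topology

private lemma limS : Tendsto (fun x : ℝ => Real.sin x / x) (𝓝[≠] 0) (𝓝 1) := by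
  have h := (Real.hasDerivAt_sin 0)
  rw [Real.cos_zero] at h
  have := hasDerivAt_iff_tendsto_slope.mp h
  refine this.congr (fun x => ?_)
  simp [slope_def_field, Real.sin_zero, div_eq_mul_inv, mul_comm]

private lemma limC : Tendsto (fun x : ℝ => (Real.cos x - 1) / x ^ 2) (𝓝[≠] 0) (𝓝 (-(1/2))) := by
  apply HasDerivAt.lhopital_zero_nhdsNE (f' := fun x => -Real.sin x) (g' := fun x => 2 * x)
  · filter_upwards with x
    simpa using (Real.hasDerivAt_cos x).sub_const 1
  · filter_upwards with x
    simpa [mul_comm] using hasDerivAt_pow 2 x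
  · filter_upwards [self_mem_nhdsWithin] with x hx
    simp only [Set.mem_compl_iff, Set.mem_singleton_iff] at hx
    positivity
  · have : Tendsto (fun x : ℝ => Real.cos x - 1) (𝓝 0) (𝓝 0) := by
      have := (Real.continuous_cos.tendsto 0).sub_const 1
      simpa using this
    exact this.mono_left nhdsWithin_le_nhds
  · have : Tendsto (fun x : ℝ => x ^ 2) (𝓝 (0:ℝ)) (𝓝 0) := by
      simpa using (continuous_pow 2).tendsto (0:ℝ)
    exact this.mono_left nhdsWithin_le_nhds
  · have : Tendsto (fun x : ℝ => -(1/2) * (Real.sin x / x)) (𝓝[≠] 0) (𝓝 (-(1/2))) := by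
      simpa using (limS.const_mul (-(1/2 : ℝ)))
    refine this.congr' ?_
    filter_upwards [self_mem_nhdsWithin] with x hx
    simp only [Set.mem_compl_iff, Set.mem_singleton_iff] at hx
    field_simp

private lemma limS3 : Tendsto (fun x : ℝ => (Real.sin x - x) / x ^ 3) (𝓝[≠] 0) (𝓝 (-(1/6))) := by
  apply HasDerivAt.lhopital_zero_nhdsNE (f' := fun x => Real.cos x - 1) (g' := fun x => 3 * x ^ 2)
  · filter_upwards with x
    exact (Real.hasDerivAt_sin x).sub (hasDerivAt_id' x)
  · filter_upwards with x
    simpa [mul_comm] using hasDerivAt_pow 3 x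
  · filter_upwards [self_mem_nhdsWithin] with x hx
    simp only [Set.mem_compl_iff, Set.mem_singleton_iff] at hx
    positivity
  · have : Tendsto (fun x : ℝ => Real.sin x - x) (𝓝 0) (𝓝 0) := by
      simpa using (Real.continuous_sin.tendsto 0).sub (continuous_id.tendsto 0)
    exact this.mono_left nhdsWithin_le_nhds
  · have : Tendsto (fun x : ℝ => x ^ 3) (𝓝 (0:ℝ)) (𝓝 0) := by
      simpa using (continuous_pow 3).tendsto (0:ℝ)
    exact this.mono_left nhdsWithin_le_nhds
  · have : Tendsto (fun x : ℝ => (1/3) * ((Real.cos x - 1) / x ^ 2)) (𝓝[≠] 0) (𝓝 (-(1/6))) := by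
      have := limC.const_mul (1/3 : ℝ)
      norm_num at this ⊢
      exact this
    refine this.congr' ?_
    filter_upwards [self_mem_nhdsWithin] with x hx
    simp only [Set.mem_compl_iff, Set.mem_singleton_iff] at hx
    field_simp

private lemma limAT : Tendsto (fun u : ℝ => (Real.arctan u - u) / u ^ 3) (𝓝[≠] 0) (𝓝 (-(1/3))) := by
  apply HasDerivAt.lhopital_zero_nhdsNE (f' := fun u => 1 / (1 + u ^ 2) - 1)
    (g' := fun u => 3 * u ^ 2)
  · filter_upwards with x
    exact (Real.hasDerivAt_arctan x).sub (hasDerivAt_id x)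
  · filter_upwards with x
    simpa [mul_comm] using hasDerivAt_pow 3 x
  · filter_upwards [self_mem_nhdsWithin] with x hx
    simp only [Set.mem_compl_iff, Set.mem_singleton_iff] at hx
    positivity
  · have : Tendsto (fun u : ℝ => Real.arctan u - u) (𝓝 0) (𝓝 0) := by
      simpa using (Real.continuous_arctan.tendsto 0).sub (continuous_id.tendsto 0)
    exact this.mono_left nhdsWithin_le_nhds
  · have : Tendsto (fun x : ℝ => x ^ 3) (𝓝 (0:ℝ)) (𝓝 0) := by
      simpa using (continuous_pow 3).tendsto (0:ℝ)
    exact this.mono_left nhdsWithin_le_nhds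
  · have key : Tendsto (fun u : ℝ => -(1 / (3 * (1 + u ^ 2)))) (𝓝 (0:ℝ)) (𝓝 (-(1/3))) := by
      have : Continuous fun u : ℝ => -(1 / (3 * (1 + u ^ 2))) := by
        apply Continuous.neg
        apply Continuous.div continuous_const
        · continuity
        · intro x; positivity
      have h := this.tendsto 0
      convert h using 2
      norm_num
    refine ((key.mono_left nhdsWithin_le_nhds).congr' ?_)
    filter_upwards [self_mem_nhdsWithin] with x hx
    simp only [Set.mem_compl_iff, Set.mem_singleton_iff] at hx
    have h1 : (1 : ℝ) + x ^ 2 ≠ 0 := by positivity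
    field_simp
    ring

private lemma limATdiv : Tendsto (fun u : ℝ => Real.arctan u / u) (𝓝[≠] 0) (𝓝 1) := by
  have h := Real.hasDerivAt_arctan 0
  norm_num at h
  have := hasDerivAt_iff_tendsto_slope.mp h
  refine this.congr (fun x => ?_)
  simp [slope_def_field, Real.arctan_zero, div_eq_mul_inv, mul_comm]

private lemma limR (p : ℝ) :
    Tendsto (fun v : ℝ => ((1 + v) ^ p - 1) / v) (𝓝[≠] 0) (𝓝 p) := by
  have hf : HasDerivAt (fun v : ℝ => (1 + v) ^ p) p 0 := by
    have h1 : HasDerivAt (fun v : ℝ => 1 + v) 1 0 := by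
      simpa using (hasDerivAt_id (0:ℝ)).const_add 1
    have := h1.rpow_const (p := p) (by norm_num)
    simpa using this
  have := hasDerivAt_iff_tendsto_slope.mp hf
  refine this.congr (fun x => ?_)
  simp [slope_def_field, div_eq_mul_inv, mul_comm]

private lemma limP (β : ℝ) (hβ : 0 < β) :
    Tendsto (fun u : ℝ =>
        (Real.sin (β * Real.arctan u) - β * u * (1 + u ^ 2) ^ (β/2 : ℝ)) / u ^ 3)
      (𝓝[≠] 0) (𝓝 (-(β^3/6 + β/3 + β^2/2))) := by
  have hx : Tendsto (fun u : ℝ => β * Real.arctan u) (𝓝[≠] 0) (𝓝[≠] 0) := by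
    rw [tendsto_nhdsWithin_iff]
    constructor
    · have : Tendsto (fun u : ℝ => β * Real.arctan u) (𝓝 0) (𝓝 (β * Real.arctan 0)) :=
        (Real.continuous_arctan.tendsto 0).const_mul β
      simpa using this.mono_left nhdsWithin_le_nhds
    · filter_upwards [self_mem_nhdsWithin] with u hu
      simp only [Set.mem_compl_iff, Set.mem_singleton_iff] at hu ⊢
      exact mul_ne_zero hβ.ne' (by simpa [Real.arctan_eq_zero_iff] using hu)
  have t1 : Tendsto (fun u : ℝ =>
      (Real.sin (β * Real.arctan u) - β * Real.arctan u) / (β * Real.arctan u) ^ 3)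
      (𝓝[≠] 0) (𝓝 (-(1/6))) := limS3.comp hx
  have t1b : Tendsto (fun u : ℝ => (β * (Real.arctan u / u)) ^ 3) (𝓝[≠] 0) (𝓝 (β ^ 3)) := by
    have := ((limATdiv.const_mul β).pow 3)
    simpa using this
  have t2 : Tendsto (fun u : ℝ => β * ((Real.arctan u - u) / u ^ 3)) (𝓝[≠] 0)
      (𝓝 (β * (-(1/3)))) := limAT.const_mul β
  have hsq : Tendsto (fun u : ℝ => u ^ 2) (𝓝[≠] 0) (𝓝[≠] 0) := by
    rw [tendsto_nhdsWithin_iff]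
    constructor
    · simpa using ((continuous_pow 2).tendsto (0:ℝ)).mono_left nhdsWithin_le_nhds
    · filter_upwards [self_mem_nhdsWithin] with u hu
      simp only [Set.mem_compl_iff, Set.mem_singleton_iff] at hu ⊢
      exact pow_ne_zero 2 hu
  have t3 : Tendsto (fun u : ℝ => (-β) * (((1 + u ^ 2) ^ (β/2 : ℝ) - 1) / u ^ 2)) (𝓝[≠] 0)
      (𝓝 ((-β) * (β/2))) := ((limR (β/2)).comp hsq).const_mul (-β)
  have total := (t1.mul t1b).add (t2.add t3)
  have hval : (-(1/6 : ℝ)) * β ^ 3 + (β * (-(1/3)) + (-β) * (β/2))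
      = -(β^3/6 + β/3 + β^2/2) := by ring
  rw [hval] at total
  refine total.congr' ?_
  filter_upwards [self_mem_nhdsWithin] with u hu
  simp only [Set.mem_compl_iff, Set.mem_singleton_iff] at hu
  have ha : Real.arctan u ≠ 0 := by simpa [Real.arctan_eq_zero_iff] using hu
  field_simp
  ring

end Aux

/-- With `c = C^(-1/α)`, `r(s) = (s²+c²s^(2/α))^(1/2)`, `θ(s) = arctan(c s^(1/α-1))`, and
`θ̃(s) = A sin((1/α-1)θ(s))/r(s)^(1/α-1)` the argument of `F(γ_c(s))`, one has the
asymptotic expansion `θ̃(s) = π/2 - A₁ s^(2/α-2) + o(s^(2/α-2))` as `s → 0+`, for some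
constant `A₁ = A₁(C,α) > 0`. -/
theorem stmt6 (C α : ℝ) (hC : 0 < C) (hα0 : 0 < α) (hα1 : α < 1)
    (A : ℝ) (hA : A = Real.pi * C ^ (1 / α) / (2 * (1 / α - 1)))
    (c : ℝ) (hc : c = C ^ (-(1 / α)))
    (r θ θt : ℝ → ℝ)
    (hr : ∀ s, r s = Real.sqrt (s ^ 2 + c ^ 2 * s ^ (2 / α)))
    (hθ : ∀ s, θ s = Real.arctan (c * s ^ (1 / α - 1)))
    (hθt : ∀ s, θt s = A * Real.sin ((1 / α - 1) * θ s) / (r s) ^ (1 / α - 1)) :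
    ∃ A₁ > 0,
      (fun s : ℝ => θt s - (Real.pi / 2 - A₁ * s ^ (2 / α - 2)))
        =o[nhdsWithin 0 (Set.Ioi 0)] fun s : ℝ => s ^ (2 / α - 2) := by
  set β : ℝ := 1 / α - 1 with hβdef
  have hβ : 0 < β := by
    have h1 : 1 < 1 / α := by rw [lt_div_iff₀ hα0]; linarith
    simp only [hβdef]; linarith
  have hc0 : 0 < c := by rw [hc]; exact Real.rpow_pos_of_pos hC _
  have hA0 : 0 < A := by
    rw [hA]
    exact div_pos (mul_pos Real.pi_pos (Real.rpow_pos_of_pos hC _)) (by positivity)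
  have hpi : Real.pi / 2 = A * β * c := by
    have hCr : C ^ (1 / α) * C ^ (-(1 / α)) = 1 := by
      rw [← Real.rpow_add hC]; simp
    have hCr2 : C ^ (1 / α) * C ^ (-1 / α) = 1 := by
      rw [← Real.rpow_add hC, show (1 / α + -1 / α : ℝ) = 0 by ring, Real.rpow_zero]
    rw [hA, hc]
    field_simp
    linear_combination (-1 : ℝ) * hCr
  set A₁ : ℝ := A * c ^ 3 * (β ^ 3 / 6 + β / 3 + β ^ 2 / 2) with hA₁def
  have hA₁ : 0 < A₁ := by positivity
  refine ⟨A₁, hA₁, ?_⟩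
  have he : 2 / α - 2 = 2 * β := by rw [hβdef]; ring
  -- eventual nonvanishing of the denominator
  have hnz : ∀ᶠ s : ℝ in nhdsWithin (0:ℝ) (Set.Ioi 0), s ^ (2 / α - 2) ≠ 0 := by
    filter_upwards [self_mem_nhdsWithin] with s hs
    exact (Real.rpow_pos_of_pos (Set.mem_Ioi.mp hs) _).ne'
  rw [Asymptotics.isLittleO_iff_tendsto' (by filter_upwards [hnz] with s h h2; exact absurd h2 h)]
  -- the map u = c * s ^ β
  have hmap : Tendsto (fun s : ℝ => c * s ^ (β : ℝ)) (𝓝[>] (0:ℝ)) (𝓝[≠] (0:ℝ)) := by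
    rw [tendsto_nhdsWithin_iff]
    constructor
    · have hcont : ContinuousAt (fun s : ℝ => s ^ (β : ℝ)) 0 :=
        Real.continuousAt_rpow_const 0 β (Or.inr hβ.le)
      have : Tendsto (fun s : ℝ => c * s ^ (β : ℝ)) (𝓝 0) (𝓝 (c * (0:ℝ) ^ (β:ℝ))) :=
        (hcont.tendsto).const_mul c
      rw [Real.zero_rpow hβ.ne', mul_zero] at this
      exact this.mono_left nhdsWithin_le_nhds
    · filter_upwards [self_mem_nhdsWithin] with s hs
      simp only [Set.mem_compl_iff, Set.mem_singleton_iff]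
      exact (mul_pos hc0 (Real.rpow_pos_of_pos hs _)).ne'
  -- denominator of H tends to 1
  have hden : Tendsto (fun u : ℝ => (1 + u ^ 2) ^ (β/2 : ℝ)) (𝓝[≠] (0:ℝ)) (𝓝 1) := by
    have hcont : ContinuousAt (fun u : ℝ => (1 + u ^ 2) ^ (β/2 : ℝ)) 0 := by
      apply ContinuousAt.rpow_const
      · exact (continuous_const.add (continuous_pow 2)).continuousAt
      · left; norm_num
    have h2 : Tendsto (fun u : ℝ => (1 + u ^ 2) ^ (β/2 : ℝ)) (𝓝[≠] (0:ℝ))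
        (𝓝 ((1 + (0:ℝ) ^ 2) ^ (β/2 : ℝ))) := hcont.tendsto.mono_left nhdsWithin_le_nhds
    norm_num at h2
    exact h2
  have limH : Tendsto (fun u : ℝ =>
      A * c ^ 3 * ((Real.sin (β * Real.arctan u) - β * u * (1 + u ^ 2) ^ (β/2 : ℝ)) / u ^ 3)
        / (1 + u ^ 2) ^ (β/2 : ℝ)) (𝓝[≠] (0:ℝ)) (𝓝 (-A₁)) := by
    have := (((limP β hβ).const_mul (A * c ^ 3)).div hden one_ne_zero)
    have hval : A * c ^ 3 * -(β ^ 3 / 6 + β / 3 + β ^ 2 / 2) / 1 = -A₁ := by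
      rw [hA₁def]; ring
    rw [hval] at this
    exact this
  have key : Tendsto (fun s : ℝ => (θt s - Real.pi / 2) / s ^ (2 / α - 2))
      (𝓝[>] (0:ℝ)) (𝓝 (-A₁)) := by
    refine (limH.comp hmap).congr' ?_
    filter_upwards [self_mem_nhdsWithin] with s hs
    have hs0 : (0:ℝ) < s := hs
    have hsb : (0:ℝ) < s ^ (β:ℝ) := Real.rpow_pos_of_pos hs0 _
    set u : ℝ := c * s ^ (β:ℝ) with hudef
    have hu0 : 0 < u := mul_pos hc0 hsb
    set w : ℝ := (1 + u ^ 2) ^ (β/2 : ℝ) with hwdef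
    have h1u : (0:ℝ) < 1 + u ^ 2 := by positivity
    have hw0 : 0 < w := Real.rpow_pos_of_pos h1u _
    -- s ^ (2β) = (s^β)^2 and s^(2/α) = s^2 * s^(2β)
    have h2β : s ^ (2 * β : ℝ) = (s ^ (β:ℝ)) ^ 2 := by
      rw [mul_comm, Real.rpow_mul hs0.le, Real.rpow_two]
    have hs2a : s ^ (2 / α : ℝ) = s ^ 2 * (s ^ (β:ℝ)) ^ 2 := by
      have : (2 / α : ℝ) = 2 + 2 * β := by rw [hβdef]; ring
      rw [this, Real.rpow_add hs0, Real.rpow_two, h2β]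
    have hrs : r s = s * Real.sqrt (1 + u ^ 2) := by
      rw [hr s, hs2a, hudef]
      rw [show s ^ 2 + c ^ 2 * (s ^ 2 * (s ^ (β:ℝ)) ^ 2) = s ^ 2 * (1 + (c * s ^ (β:ℝ)) ^ 2) by ring]
      rw [Real.sqrt_mul (sq_nonneg s), Real.sqrt_sq hs0.le]
    have hrb : (r s) ^ (β:ℝ) = s ^ (β:ℝ) * w := by
      rw [hrs, Real.mul_rpow hs0.le (Real.sqrt_nonneg _), hwdef]
      congr 1
      rw [Real.sqrt_eq_rpow, ← Real.rpow_mul h1u.le]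
      ring_nf
    have hθs : θ s = Real.arctan u := by rw [hθ s, hudef]
    have hθts : θt s = A * Real.sin (β * Real.arctan u) / (s ^ (β:ℝ) * w) := by
      rw [hθt s, hθs, hrb]
    -- now the algebraic identity
    simp only [Function.comp]
    rw [hθts, he, h2β, hpi, hudef]
    have hsbne : s ^ (β:ℝ) ≠ 0 := hsb.ne'
    have hwne : w ≠ 0 := hw0.ne'
    have hcne : c ≠ 0 := hc0.ne'
    field_simp
    rw [hwdef, hudef, mul_pow, show β / 2 = β * (1 / 2) by ring]
    ring
  have final := key.add_const A₁
  rw [neg_add_cancel] at final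
  refine final.congr' ?_
  filter_upwards [self_mem_nhdsWithin] with s hs
  have hse : s ^ (2 / α - 2 : ℝ) ≠ 0 := (Real.rpow_pos_of_pos (Set.mem_Ioi.mp hs) _).ne'
  rw [show θt s - (Real.pi / 2 - A₁ * s ^ (2 / α - 2 : ℝ))
      = (θt s - Real.pi / 2) + A₁ * s ^ (2 / α - 2 : ℝ) from by ring,
    add_div, mul_div_cancel_right₀ _ hse]
end

section
/- With c = C^{-1/α} fixed and ỹ(s) = r̃(s) sin θ̃(s) where F(γ_c(s)) = r̃(s)e^{iθ̃(s)}, F(z)=exp(−A/z^{1/α−1}), one has log(1/ỹ(s)) ~ A/s^{1/α−1} as s → 0+. -/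
open Filter

/-- With `c = C^(-1/α)` and `ỹ(s) = r̃(s) sin θ̃(s)`, where
`r̃(s) = exp(-A cos((1/α-1)θ(s))/r(s)^(1/α-1))` and
`θ̃(s) = A sin((1/α-1)θ(s))/r(s)^(1/α-1)` are modulus and argument of `F(γ_c(s))`,
one has `log(1/ỹ(s)) ~ A/s^(1/α-1)` as `s → 0+`. -/
theorem stmt7 (C α : ℝ) (hC : 0 < C) (hα0 : 0 < α) (hα1 : α < 1)
    (A : ℝ) (hA : A = Real.pi * C ^ (1 / α) / (2 * (1 / α - 1)))
    (c : ℝ) (hc : c = C ^ (-(1 / α)))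
    (r θ rt θt yt : ℝ → ℝ)
    (hr : ∀ s, r s = Real.sqrt (s ^ 2 + c ^ 2 * s ^ (2 / α)))
    (hθ : ∀ s, θ s = Real.arctan (c * s ^ (1 / α - 1)))
    (hrt : ∀ s, rt s = Real.exp (-(A * Real.cos ((1 / α - 1) * θ s)) / (r s) ^ (1 / α - 1)))
    (hθt : ∀ s, θt s = A * Real.sin ((1 / α - 1) * θ s) / (r s) ^ (1 / α - 1))
    (hyt : ∀ s, yt s = rt s * Real.sin (θt s)) :
    Tendsto (fun s : ℝ => Real.log (1 / yt s) / (A / s ^ (1 / α - 1)))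
      (nhdsWithin 0 (Set.Ioi 0)) (nhds 1) := by
  have hb : 0 < 1 / α - 1 := by
    have h1 : 1 < 1 / α := by
      rw [lt_div_iff₀ hα0]; linarith
    linarith
  set b := 1 / α - 1 with hbdef
  set l := nhdsWithin (0:ℝ) (Set.Ioi 0) with hl
  have hcpos : 0 < c := by rw [hc]; exact Real.rpow_pos_of_pos hC _
  have hApos : 0 < A := by
    rw [hA]
    apply div_pos
    · have := Real.pi_pos
      have := Real.rpow_pos_of_pos hC (1/α)
      positivity
    · linarith
  have hK : C ^ (1/α) * C ^ (-(1/α)) = 1 := by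
    rw [← Real.rpow_add hC]; simp
  have hAcb : A * c * b = Real.pi / 2 := by
    have : A * c * b = Real.pi * (C ^ (1/α) * C ^ (-(1/α))) / 2 := by
      rw [hA, hc]; field_simp
    rw [this, hK]; ring
  -- basic limits
  have hsl : ∀ᶠ s in l, (0:ℝ) < s := by
    filter_upwards [self_mem_nhdsWithin] with s hs using hs
  have t0 : Tendsto (fun s : ℝ => s ^ b) l (nhds 0) := by
    have h := (Real.continuousAt_rpow_const 0 b (Or.inr hb.le)).tendsto
    rw [Real.zero_rpow hb.ne'] at h
    exact h.mono_left nhdsWithin_le_nhds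
  have t0' : Tendsto (fun s : ℝ => s ^ (2*b)) l (nhds 0) := by
    have h := (Real.continuousAt_rpow_const 0 (2*b) (Or.inr (by linarith))).tendsto
    rw [Real.zero_rpow (by linarith : (2*b) ≠ 0)] at h
    exact h.mono_left nhdsWithin_le_nhds
  set g : ℝ → ℝ := fun s => Real.sqrt (1 + c^2 * s ^ (2*b)) ^ b with hg
  have tg : Tendsto g l (nhds 1) := by
    have hcont : ContinuousAt (fun t : ℝ => Real.sqrt (1 + c^2 * t) ^ b) 0 := by
      apply ContinuousAt.rpow_const
      · exact (Real.continuous_sqrt.comp (by continuity)).continuousAt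
      · left; simp
    have h := hcont.tendsto.comp t0'
    simpa [Function.comp_def] using h
  -- θ tends to 0
  have tu : Tendsto (fun s : ℝ => c * s ^ b) l (nhds 0) := by
    simpa using t0.const_mul c
  have tθ : Tendsto θ l (nhds 0) := by
    have h := (Real.continuous_arctan.continuousAt (x := 0)).tendsto.comp tu
    simp only [Real.arctan_zero] at h
    exact h.congr (fun s => (hθ s).symm)
  have tcos : Tendsto (fun s => Real.cos (b * θ s)) l (nhds 1) := by
    have h0 := tθ.const_mul b
    rw [mul_zero] at h0
    have h := (Real.continuous_cos.continuousAt (x := 0)).tendsto.comp h0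
    simpa [Function.comp_def] using h
  -- φ(u) = sin(b arctan u)/u tends to b
  have hφ : Tendsto (fun u : ℝ => Real.sin (b * Real.arctan u) / u)
      (nhdsWithin 0 {(0:ℝ)}ᶜ) (nhds b) := by
    have hd : HasDerivAt (fun u : ℝ => Real.sin (b * Real.arctan u)) b 0 := by
      have h1 : HasDerivAt (fun u : ℝ => b * Real.arctan u) b 0 := by
        simpa using (Real.hasDerivAt_arctan 0).const_mul b
      have h2 := (Real.hasDerivAt_sin (b * Real.arctan 0)).comp 0 h1
      simpa [Function.comp_def] using h2
    have h := hasDerivAt_iff_tendsto_slope.mp hd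
    apply h.congr
    intro u
    simp [slope_def_field]
  have tuc : Tendsto (fun s : ℝ => c * s ^ b) l (nhdsWithin 0 {(0:ℝ)}ᶜ) := by
    rw [tendsto_nhdsWithin_iff]
    refine ⟨tu, ?_⟩
    filter_upwards [hsl] with s hs
    have : 0 < c * s ^ b := by positivity
    simpa using this.ne'
  have tφ : Tendsto (fun s : ℝ => Real.sin (b * Real.arctan (c * s ^ b)) / (c * s ^ b))
      l (nhds b) := hφ.comp tuc
  -- r s ^ b = s^b * g s for s > 0
  have hrb : ∀ s : ℝ, 0 < s → r s ^ b = s ^ b * g s := by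
    intro s hs
    have h2α : (2:ℝ) / α = 2 * b + 2 := by rw [hbdef]; ring
    have hsr : s ^ ((2:ℝ)/α) = s ^ 2 * s ^ (2*b) := by
      rw [h2α, Real.rpow_add hs]
      rw [show ((2:ℝ) : ℝ) = ((2:ℕ) : ℝ) by norm_num, Real.rpow_natCast]
      ring
    have hrs : r s = s * Real.sqrt (1 + c^2 * s ^ (2*b)) := by
      rw [hr s, hsr]
      rw [show s^2 + c^2 * (s^2 * s^(2*b)) = s^2 * (1 + c^2 * s^(2*b)) by ring]
      rw [Real.sqrt_mul (sq_nonneg s), Real.sqrt_sq hs.le]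
    rw [hrs, Real.mul_rpow hs.le (Real.sqrt_nonneg _)]
  -- θt tends to π/2
  have tθt : Tendsto θt l (nhds (Real.pi / 2)) := by
    have hlim : Tendsto (fun s : ℝ =>
        A * c * (Real.sin (b * Real.arctan (c * s ^ b)) / (c * s ^ b)) / g s)
        l (nhds (Real.pi / 2)) := by
      have h := ((tφ.const_mul (A*c)).div tg one_ne_zero)
      rw [show A * c * b / 1 = Real.pi / 2 by rw [hAcb]; ring] at h
      exact h
    apply hlim.congr'
    filter_upwards [hsl, tg.eventually (eventually_gt_nhds (by norm_num : (0:ℝ) < 1))]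
      with s hs hgs
    have hS : (0:ℝ) < s ^ b := Real.rpow_pos_of_pos hs b
    rw [hθt s, hθ s, hrb s hs]
    field_simp
  have tsin : Tendsto (fun s => Real.sin (θt s)) l (nhds 1) := by
    have h := (Real.continuous_sin.continuousAt (x := Real.pi/2)).tendsto.comp tθt
    simpa [Function.comp_def] using h
  have tlog : Tendsto (fun s => Real.log (Real.sin (θt s))) l (nhds 0) := by
    have h := (Real.continuousAt_log one_ne_zero).tendsto.comp tsin
    simpa [Function.comp_def] using h
  -- the target function equals E eventually
  have tE : Tendsto (fun s => Real.cos (b * θ s) / g s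
      - Real.log (Real.sin (θt s)) * s ^ b / A) l (nhds 1) := by
    have h := (tcos.div tg one_ne_zero).sub (((tlog.mul t0).div_const A))
    simpa using h
  apply tE.congr'
  filter_upwards [hsl, tsin.eventually (eventually_gt_nhds (by norm_num : (0:ℝ) < 1))]
    with s hs hsin
  have hsin0 : 0 < Real.sin (θt s) := hsin
  have hS : (0:ℝ) < s ^ b := Real.rpow_pos_of_pos hs b
  have hG : (0:ℝ) < g s := by
    have harg : (0:ℝ) < 1 + c^2 * s ^ (2*b) := by
      have := Real.rpow_pos_of_pos hs (2*b); positivity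
    exact Real.rpow_pos_of_pos (Real.sqrt_pos.mpr harg) b
  have hrtpos : 0 < rt s := by rw [hrt s]; exact Real.exp_pos _
  have h1 : Real.log (1 / yt s) = A * Real.cos (b * θ s) / (r s ^ b)
      - Real.log (Real.sin (θt s)) := by
    rw [hyt s, one_div, Real.log_inv, Real.log_mul hrtpos.ne' hsin0.ne', hrt s, Real.log_exp]
    ring
  rw [h1, hrb s hs]
  field_simp
end

section
/- If Ω ⊂ ℂ^n is a bounded domain satisfying the (C,α,r)-cusp condition and z ∈ Ω is sufficiently close to ∂Ω, with associated cusp vertex p ∈ ∂Ω, then |z−p| ≲ δ_Ω(z)^α; in particular |z−p| → 0 as δ_Ω(z) → 0. -/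
open Metric

/-- The `(C,α)`-cusp in `ℂⁿ` with vertex `p` and axis the unit vector `v`. -/
def cuspSet {n : ℕ} (p v : EuclideanSpace ℂ (Fin n)) (C α : ℝ) :
    Set (EuclideanSpace ℂ (Fin n)) :=
  {z | C * ‖(z - p) - (inner ℂ (z - p) v : ℂ) • v‖ ^ α < ((inner ℂ (z - p) v : ℂ)).re}

/-- `Ω` satisfies the `(C,α,r)`-cusp condition. -/
def CuspCondition {n : ℕ} (Ω : Set (EuclideanSpace ℂ (Fin n))) (C α r : ℝ) : Prop :=
  ∃ ε > 0, ∀ z ∈ Ω, Metric.infDist z Ωᶜ < ε →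
    ∃ p v : EuclideanSpace ℂ (Fin n), ∃ t : ℝ,
      p ∈ frontier Ω ∧ ‖v‖ = 1 ∧ 0 < t ∧ z = p + (t : ℂ) • v ∧
      cuspSet p v C α ∩ Metric.ball p r ⊆ Ω ∧ dist z p < r / 2

set_option maxHeartbeats 1000000 in
/-- If `Ω` satisfies the `(C,α,r)`-cusp condition and `z ∈ Ω` is sufficiently close to
`∂Ω`, then for any associated cusp data `(p,v,t)` one has `|z-p| ≲ δ_Ω(z)^α`; in
particular `|z-p| → 0` as `δ_Ω(z) → 0`. -/
theorem stmt14 (n : ℕ) (C α r : ℝ) (hC : 0 < C) (hα0 : 0 < α) (hα1 : α < 1) (hr : 0 < r)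
    (Ω : Set (EuclideanSpace ℂ (Fin n))) (hΩ : IsOpen Ω) (hconn : IsConnected Ω)
    (hbdd : Bornology.IsBounded Ω) (hcusp : CuspCondition Ω C α r) :
    ∃ K > 0, ∃ ε > 0, ∀ z ∈ Ω, Metric.infDist z Ωᶜ < ε →
      ∀ p v : EuclideanSpace ℂ (Fin n), ∀ t : ℝ,
        p ∈ frontier Ω → ‖v‖ = 1 → 0 < t → z = p + (t : ℂ) • v →
        cuspSet p v C α ∩ Metric.ball p r ⊆ Ω → dist z p < r / 2 →
        dist z p ≤ K * (Metric.infDist z Ωᶜ) ^ α := by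
  have hr2 : (0:ℝ) < r/2 := by linarith
  set c : ℝ := min ((1/(4*C)) ^ (1/α)) ((1/2) * (r/2) ^ (1 - 1/α)) with hcdef
  have hc0 : 0 < c := by
    apply lt_min
    · positivity
    · positivity
  refine ⟨(1/c) ^ α, by positivity, 1, one_pos, ?_⟩
  intro z hz hδ p v t hp hv ht hzpt hsub hhalf
  have hdist : dist z p = t := by
    rw [hzpt]
    simp [dist_eq_norm, norm_smul, hv, abs_of_pos ht]
  have htr : t < r / 2 := hdist ▸ hhalf
  set ρ := c * t ^ (1/α) with hρdef
  have hρ0 : 0 < ρ := by positivity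
  -- ρ ≤ t/2
  have htexp : t ^ (1/α) ≤ (r/2) ^ (1/α - 1) * t := by
    have h1 : t ^ (1/α) = t ^ (1/α - 1) * t := by
      rw [show (1/α) = (1/α - 1) + 1 by ring, Real.rpow_add_one ht.ne']
      norm_num
    rw [h1]
    have : t ^ (1/α - 1) ≤ (r/2) ^ (1/α - 1) := by
      apply Real.rpow_le_rpow ht.le htr.le
      have : 1 ≤ 1/α := by
        rw [le_div_iff₀ hα0]; linarith
      linarith
    exact mul_le_mul_of_nonneg_right this ht.le
  have hcomb : ((r/2) ^ (1 - 1/α)) * ((r/2) ^ (1/α - 1)) = 1 := by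
    rw [← Real.rpow_add hr2]
    norm_num
  have hρt : ρ ≤ t / 2 := by
    have h1 : ρ ≤ ((1/2) * (r/2) ^ (1 - 1/α)) * t ^ (1/α) :=
      mul_le_mul_of_nonneg_right (min_le_right _ _) (Real.rpow_nonneg ht.le _)
    have h2 : ((1/2) * (r/2) ^ (1 - 1/α)) * t ^ (1/α)
        ≤ ((1/2) * (r/2) ^ (1 - 1/α)) * ((r/2) ^ (1/α - 1) * t) := by
      apply mul_le_mul_of_nonneg_left htexp
      positivity
    have h3 : ((1/2) * (r/2) ^ (1 - 1/α)) * ((r/2) ^ (1/α - 1) * t) = t / 2 := by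
      have := hcomb
      nlinarith [hcomb]
    linarith
  -- c^α ≤ 1/(4C)
  have hcα : c ^ α ≤ 1/(4*C) := by
    have h1 : c ^ α ≤ ((1/(4*C)) ^ (1/α)) ^ α :=
      Real.rpow_le_rpow hc0.le (min_le_left _ _) hα0.le
    rwa [one_div α, Real.rpow_inv_rpow (by positivity) hα0.ne'] at h1
  have htα : (t ^ (1/α)) ^ α = t := by
    rw [one_div α, Real.rpow_inv_rpow ht.le hα0.ne']
  -- main bound on the cusp term
  have hCρ : C * (2*ρ) ^ α ≤ t/2 := by
    have h1 : (2*ρ) ^ α = 2 ^ α * (c ^ α * t) := by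
      rw [Real.mul_rpow (by norm_num) hρ0.le, hρdef,
        Real.mul_rpow hc0.le (Real.rpow_nonneg ht.le _), htα]
    have h2 : (2:ℝ) ^ α ≤ 2 := by
      calc (2:ℝ) ^ α ≤ (2:ℝ) ^ (1:ℝ) :=
            Real.rpow_le_rpow_of_exponent_le one_le_two hα1.le
        _ = 2 := Real.rpow_one 2
    have h3 : C * (2*ρ) ^ α ≤ C * (2 * (c ^ α * t)) := by
      rw [h1]
      have : (2:ℝ) ^ α * (c ^ α * t) ≤ 2 * (c ^ α * t) := by
        apply mul_le_mul_of_nonneg_right h2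
        positivity
      exact mul_le_mul_of_nonneg_left this hC.le
    have h4 : C * (2 * (c ^ α * t)) ≤ C * (2 * ((1/(4*C)) * t)) := by
      have : c ^ α * t ≤ (1/(4*C)) * t := mul_le_mul_of_nonneg_right hcα ht.le
      nlinarith
    have h5 : C * (2 * ((1/(4*C)) * t)) = t/2 := by
      field_simp
      ring
    linarith
  -- the ball around z is inside the cusp
  have hball : ball z ρ ⊆ cuspSet p v C α ∩ ball p r := by
    intro w hw
    have he : ‖w - z‖ < ρ := by
      rw [← dist_eq_norm]; exact mem_ball.mp hw
    have hwp : w - p = (w - z) + (t:ℂ) • v := by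
      have hz2 : z - p = (t:ℂ) • v := by rw [hzpt]; abel
      rw [← hz2]; abel
    have hvv : (inner ℂ v v : ℂ) = 1 := by
      rw [inner_self_eq_norm_sq_to_K, hv]; norm_num
    have hinner : (inner ℂ (w - p) v : ℂ) = inner ℂ (w - z) v + (t:ℂ) := by
      rw [hwp, inner_add_left, inner_smul_left, hvv]
      simp [Complex.conj_ofReal, inner_sub_left]
    have hev : ‖(inner ℂ (w - z) v : ℂ)‖ ≤ ‖w - z‖ := by
      simpa [hv, inner_sub_left] using norm_inner_le_norm (𝕜 := ℂ) (w - z) v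
    have horth : (w - p) - (inner ℂ (w - p) v : ℂ) • v
        = (w - z) - (inner ℂ (w - z) v : ℂ) • v := by
      rw [hinner, hwp, add_smul]
      module
    constructor
    · show C * ‖(w - p) - (inner ℂ (w - p) v : ℂ) • v‖ ^ α < ((inner ℂ (w - p) v : ℂ)).re
      have hn : ‖(w - p) - (inner ℂ (w - p) v : ℂ) • v‖ ≤ 2 * ‖w - z‖ := by
        rw [horth]
        calc ‖(w - z) - (inner ℂ (w - z) v : ℂ) • v‖
            ≤ ‖w - z‖ + ‖(inner ℂ (w - z) v : ℂ) • v‖ := norm_sub_le _ _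
          _ ≤ ‖w - z‖ + ‖w - z‖ := by
              rw [norm_smul, hv, mul_one]; linarith
          _ = 2 * ‖w - z‖ := by ring
      have hre : t - ‖w - z‖ ≤ ((inner ℂ (w - p) v : ℂ)).re := by
        rw [hinner]
        have h1 : |((inner ℂ (w - z) v : ℂ)).re| ≤ ‖w - z‖ :=
          le_trans (Complex.abs_re_le_norm _) hev
        have := abs_le.mp h1
        simp only [Complex.add_re, Complex.ofReal_re]
        linarith
      have hlhs : C * ‖(w - p) - (inner ℂ (w - p) v : ℂ) • v‖ ^ α ≤ t/2 := by
        have h1 : ‖(w - p) - (inner ℂ (w - p) v : ℂ) • v‖ ^ α ≤ (2*ρ) ^ α := by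
          apply Real.rpow_le_rpow (norm_nonneg _) _ hα0.le
          linarith
        calc C * ‖(w - p) - (inner ℂ (w - p) v : ℂ) • v‖ ^ α
            ≤ C * (2*ρ) ^ α := mul_le_mul_of_nonneg_left h1 hC.le
          _ ≤ t/2 := hCρ
      have : t/2 ≤ t - ρ := by linarith
      linarith
    · have h1 : dist w p ≤ dist w z + dist z p := dist_triangle _ _ _
      have h2 : dist w z < ρ := mem_ball.mp hw
      have : dist w p < r := by
        rw [hdist] at h1
        have : ρ ≤ t/2 := hρt
        linarith
      exact mem_ball.mpr this
  -- p is in the complement of Ω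
  have hpc : p ∈ Ωᶜ := by
    intro hpΩ
    have := hΩ.frontier_eq ▸ hp
    exact this.2 hpΩ
  -- lower bound on the distance to the boundary
  have hinf : ρ ≤ infDist z Ωᶜ := by
    by_contra h
    push_neg at h
    obtain ⟨y, hy, hdy⟩ := (infDist_lt_iff ⟨p, hpc⟩).mp h
    have : y ∈ Ω := hsub (hball (mem_ball'.mpr hdy))
    exact hy this
  have hδ0 : (0:ℝ) ≤ infDist z Ωᶜ := infDist_nonneg
  have h1 : t ^ (1/α) ≤ infDist z Ωᶜ / c := by
    rw [le_div_iff₀ hc0]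
    calc t ^ (1/α) * c = ρ := by rw [hρdef]; ring
      _ ≤ infDist z Ωᶜ := hinf
  calc dist z p = t := hdist
    _ = (t ^ (1/α)) ^ α := htα.symm
    _ ≤ (infDist z Ωᶜ / c) ^ α :=
        Real.rpow_le_rpow (Real.rpow_nonneg ht.le _) h1 hα0.le
    _ = (1/c) ^ α * (infDist z Ωᶜ) ^ α := by
        rw [Real.div_rpow hδ0 hc0.le, one_div, Real.inv_rpow hc0.le, inv_mul_eq_div]
end

section
/- Every bounded Hölder domain Ω ⊂ ℂ^n (i.e. ∂Ω is locally the graph of a Hölder continuous function of order α_j over a real hyperplane) satisfies the (C,α,r)-cusp condition for suitable constants C, r, where α = min_j α_j can be taken. -/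
open Metric

/-- Orthogonal projection onto the complex hyperplane orthogonal to `v`. -/
noncomputable def projPerp {n : ℕ} (v x : EuclideanSpace ℂ (Fin n)) :
    EuclideanSpace ℂ (Fin n) :=
  x - (inner ℂ x v : ℂ) • v

section Aux

variable {n : ℕ}

lemma projPerp_sub (v x y : EuclideanSpace ℂ (Fin n)) :
    projPerp v (x - y) = projPerp v x - projPerp v y := by
  simp only [projPerp, inner_sub_left, sub_smul]
  abel

lemma projPerp_add (v x y : EuclideanSpace ℂ (Fin n)) :
    projPerp v (x + y) = projPerp v x + projPerp v y := by
  simp only [projPerp, inner_add_left, add_smul]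
  abel

lemma inner_real_smul_self {v : EuclideanSpace ℂ (Fin n)} (hv : ‖v‖ = 1) (t : ℝ) :
    (inner ℂ ((t : ℂ) • v) v : ℂ) = (t : ℂ) := by
  rw [inner_smul_left, inner_self_eq_norm_sq_to_K, hv]
  simp [Complex.conj_ofReal]

lemma projPerp_real_smul_self {v : EuclideanSpace ℂ (Fin n)} (hv : ‖v‖ = 1) (t : ℝ) :
    projPerp v ((t : ℂ) • v) = 0 := by
  rw [projPerp, inner_real_smul_self hv t, sub_self]

lemma norm_projPerp_le {v : EuclideanSpace ℂ (Fin n)} (hv : ‖v‖ = 1)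
    (x : EuclideanSpace ℂ (Fin n)) : ‖projPerp v x‖ ≤ 2 * ‖x‖ := by
  have h1 : ‖(inner ℂ x v : ℂ)‖ ≤ ‖x‖ * ‖v‖ := norm_inner_le_norm x v
  calc ‖projPerp v x‖ = ‖x - (inner ℂ x v : ℂ) • v‖ := rfl
    _ ≤ ‖x‖ + ‖(inner ℂ x v : ℂ) • v‖ := norm_sub_le _ _
    _ = ‖x‖ + ‖(inner ℂ x v : ℂ)‖ * ‖v‖ := by rw [norm_smul]
    _ ≤ ‖x‖ + (‖x‖ * ‖v‖) * ‖v‖ := by nlinarith [norm_nonneg v, norm_nonneg x]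
    _ = 2 * ‖x‖ := by rw [hv]; ring

end Aux

set_option maxHeartbeats 2000000

/-- **Hölder domains satisfy a cusp condition.** If `Ω ⊂ ℂⁿ` is a bounded domain whose
boundary is covered by finitely many open sets `V j` on which `∂Ω` is the graph of a
Hölder continuous function `h j` of order `α j` (over the real hyperplane orthogonal to
the unit vector `v j`), then `Ω` satisfies the `(C,α,r)`-cusp condition for suitable
constants `C, r`, with `α = min α j`. -/
theorem stmt15 (n m : ℕ) (hm : 0 < m) (Ω : Set (EuclideanSpace ℂ (Fin n)))
    (hΩ : IsOpen Ω) (hconn : IsConnected Ω) (hbdd : Bornology.IsBounded Ω)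
    (V : Fin m → Set (EuclideanSpace ℂ (Fin n))) (hVopen : ∀ j, IsOpen (V j))
    (hcover : frontier Ω ⊆ ⋃ j, V j)
    (p : Fin m → EuclideanSpace ℂ (Fin n)) (hp : ∀ j, p j ∈ V j)
    (v : Fin m → EuclideanSpace ℂ (Fin n)) (hv : ∀ j, ‖v j‖ = 1)
    (αj Cj : Fin m → ℝ) (hαj : ∀ j, 0 < αj j ∧ αj j < 1) (hCj : ∀ j, 0 < Cj j)
    (h : Fin m → EuclideanSpace ℂ (Fin n) → ℝ) (hh0 : ∀ j, h j 0 = 0)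
    (hHolder : ∀ j, ∀ w₁ ∈ V j, ∀ w₂ ∈ V j,
      |h j (projPerp (v j) (w₁ - p j)) - h j (projPerp (v j) (w₂ - p j))| ≤
        Cj j * ‖projPerp (v j) (w₁ - p j) - projPerp (v j) (w₂ - p j)‖ ^ (αj j))
    (hgraph : ∀ j, Ω ∩ V j =
      {w ∈ V j | h j (projPerp (v j) (w - p j)) < ((inner ℂ (w - p j) (v j) : ℂ)).re}) :
    ∃ C r : ℝ, 0 < C ∧ 0 < r ∧ CuspCondition Ω C (⨅ j, αj j) r := by
  haveI : Nonempty (Fin m) := ⟨⟨0, hm⟩⟩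
  set α := ⨅ j, αj j with hαdef
  have hbb : BddBelow (Set.range αj) := (Set.finite_range αj).bddBelow
  have hαle : ∀ j, α ≤ αj j := fun j => ciInf_le hbb j
  obtain ⟨j0, hj0⟩ := Finite.exists_min αj
  have hαpos : 0 < α := lt_of_lt_of_le (hαj j0).1 (le_ciInf hj0)
  clear_value α
  -- the constant C
  set C := 1 + ∑ i, Cj i with hCdef
  have hsum : 0 ≤ ∑ i, Cj i := Finset.sum_nonneg fun i _ => (hCj i).le
  have hCpos : 0 < C := by rw [hCdef]; linarith
  clear_value C
  have hCge : ∀ i, Cj i ≤ C := by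
    intro i
    have := Finset.single_le_sum (f := Cj) (fun k _ => (hCj k).le) (Finset.mem_univ i)
    rw [hCdef]; linarith
  -- the frontier is compact; get a Lebesgue number δ
  have hfc : IsCompact (frontier Ω) :=
    Metric.isCompact_of_isClosed_isBounded isClosed_frontier
      (hbdd.closure.subset frontier_subset_closure)
  obtain ⟨δ, hδpos, hδ⟩ := lebesgue_number_lemma_of_metric hfc hVopen hcover
  -- the radius r and the smallness parameter b
  set r := min (δ / 2) (1 / 2) with hrdef
  clear_value r
  have hrpos : 0 < r := by rw [hrdef]; exact lt_min (by linarith) (by norm_num)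
  have hrδ : r ≤ δ / 2 := by rw [hrdef]; exact min_le_left _ _
  have hr1 : r ≤ 1 / 2 := by rw [hrdef]; exact min_le_right _ _
  set b := min 1 (min (r / 8) ((r / (8 * C)) ^ (α⁻¹))) with hbdef
  clear_value b
  have hb0 : 0 < b := by
    rw [hbdef]
    exact lt_min one_pos (lt_min (by linarith) (Real.rpow_pos_of_pos (by positivity) _))
  have hb1 : b ≤ 1 := by rw [hbdef]; exact min_le_left _ _
  have hbr : b ≤ r / 8 := by rw [hbdef]; exact le_trans (min_le_right _ _) (min_le_left _ _)
  have hbC : b ≤ (r / (8 * C)) ^ (α⁻¹) := by rw [hbdef]; exact le_trans (min_le_right _ _) (min_le_right _ _)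
  have hkey : b + C * b ^ α ≤ r / 4 := by
    have h2 : ((r / (8 * C)) ^ (α⁻¹)) ^ α = r / (8 * C) :=
      Real.rpow_inv_rpow (by positivity) hαpos.ne'
    have h3 : b ^ α ≤ r / (8 * C) := by
      rw [← h2]; exact Real.rpow_le_rpow hb0.le hbC hαpos.le
    have h4 : C * b ^ α ≤ r / 8 := by
      calc C * b ^ α ≤ C * (r / (8 * C)) := mul_le_mul_of_nonneg_left h3 hCpos.le
        _ = r / 8 := by field_simp
    linarith
  -- Ωᶜ is nonempty
  obtain ⟨R, hR⟩ := hbdd.subset_ball 0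
  have hyne : Ωᶜ.Nonempty := by
    refine ⟨((max R 0 + 1 : ℝ) : ℂ) • v ⟨0, hm⟩, fun hmem => ?_⟩
    have h1 := hR hmem
    rw [mem_ball, dist_zero_right, norm_smul, hv ⟨0, hm⟩, mul_one, Complex.norm_real,
      Real.norm_eq_abs, abs_of_pos (by positivity)] at h1
    have := le_max_left R 0
    linarith
  refine ⟨C, r, hCpos, hrpos, ?_⟩
  unfold CuspCondition
  refine ⟨b / 2, by positivity, ?_⟩
  intro z hz hzd
  -- the nearest boundary point q
  obtain ⟨q, hqc, hqd⟩ := (hΩ.isClosed_compl).exists_infDist_eq_dist hyne z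
  rw [hqd] at hzd
  set d := dist z q with hd
  clear_value d
  have hzq : z ≠ q := fun e => hqc (e ▸ hz)
  have hd0 : 0 < d := by rw [hd]; exact dist_pos.mpr hzq
  have hball : ∀ w, dist z w < d → w ∈ Ω := by
    intro w hw
    by_contra hwc
    have h1 : infDist z Ωᶜ ≤ dist z w := infDist_le_dist_of_mem hwc
    rw [hqd] at h1
    exact absurd h1 (not_le.mpr hw)
  have hzqnorm : ‖z - q‖ = d := by rw [hd, dist_eq_norm]
  -- q is a frontier point
  have hqcl : q ∈ closure Ω := by
    rw [Metric.mem_closure_iff]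
    intro ε' hε'
    set u : ℝ := min 1 (ε' / (2 * d)) with hu
    clear_value u
    have hu0 : 0 < u := by rw [hu]; exact lt_min one_pos (by positivity)
    have hu1 : u ≤ 1 := by rw [hu]; exact min_le_left _ _
    have hu2 : u ≤ ε' / (2 * d) := by rw [hu]; exact min_le_right _ _
    refine ⟨q + u • (z - q), hball _ ?_, ?_⟩
    · have he : z - (q + u • (z - q)) = (1 - u) • (z - q) := by
        rw [sub_smul, one_smul]; abel
      rw [dist_eq_norm, he, norm_smul, Real.norm_eq_abs, abs_of_nonneg (by linarith), hzqnorm]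
      nlinarith
    · have he : q + u • (z - q) - q = u • (z - q) := by abel
      rw [dist_comm, dist_eq_norm, he, norm_smul, Real.norm_eq_abs, abs_of_nonneg hu0.le,
        hzqnorm]
      have h5 : u * d ≤ (ε' / (2 * d)) * d := by nlinarith
      have h6 : (ε' / (2 * d)) * d < ε' := by
        rw [div_mul_eq_mul_div, div_lt_iff₀ (by positivity)]
        nlinarith
      linarith
  have hqfr : q ∈ frontier Ω := by rw [hΩ.frontier_eq]; exact ⟨hqcl, hqc⟩
  obtain ⟨j, hjV⟩ := hδ q hqfr
  -- the local defining function ρ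
  set ρ : EuclideanSpace ℂ (Fin n) → ℝ :=
    fun w => ((inner ℂ (w - p j) (v j) : ℂ)).re - h j (projPerp (v j) (w - p j)) with hρ
  clear_value ρ
  have hiff : ∀ w, w ∈ V j → (w ∈ Ω ↔ 0 < ρ w) := by
    intro w hw
    constructor
    · intro hwΩ
      have hmem : w ∈ Ω ∩ V j := ⟨hwΩ, hw⟩
      rw [hgraph j] at hmem
      simp only [hρ]
      linarith [hmem.2]
    · intro hwρ
      simp only [hρ] at hwρ
      have hmem : w ∈ Ω ∩ V j := by
        rw [hgraph j]
        exact ⟨hw, by linarith⟩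
      exact hmem.1
  -- the basic Hölder comparison along the graph
  have key : ∀ w₁ w₂ : EuclideanSpace ℂ (Fin n), w₁ ∈ V j → w₂ ∈ V j →
      ρ w₂ + ((inner ℂ (w₁ - w₂) (v j) : ℂ)).re
          - Cj j * ‖projPerp (v j) (w₁ - w₂)‖ ^ (αj j) ≤ ρ w₁ ∧
      ρ w₁ ≤ ρ w₂ + ((inner ℂ (w₁ - w₂) (v j) : ℂ)).re
          + Cj j * ‖projPerp (v j) (w₁ - w₂)‖ ^ (αj j) := by
    intro w₁ w₂ h1 h2
    have hX : w₁ - p j = (w₂ - p j) + (w₁ - w₂) := by abel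
    have hH := hHolder j w₁ h1 w₂ h2
    rw [abs_le] at hH
    have hπ : projPerp (v j) (w₁ - p j) - projPerp (v j) (w₂ - p j)
        = projPerp (v j) (w₁ - w₂) := by
      rw [hX, projPerp_add]; abel
    rw [hπ] at hH
    have hre : ((inner ℂ (w₁ - p j) (v j) : ℂ)).re
        = ((inner ℂ (w₂ - p j) (v j) : ℂ)).re + ((inner ℂ (w₁ - w₂) (v j) : ℂ)).re := by
      rw [hX, inner_add_left, Complex.add_re]
    simp only [hρ]
    constructor <;> linarith [hH.1, hH.2, hre]
  -- basic memberships
  have hqV : q ∈ V j := hjV (mem_ball_self hδpos)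
  have hzV : z ∈ V j := hjV (by rw [mem_ball]; rw [← hd]; linarith)
  have hρz : 0 < ρ z := (hiff z hzV).mp hz
  have hρq : ρ q ≤ 0 := by
    by_contra hc
    push_neg at hc
    exact hqc ((hiff q hqV).mpr hc)
  -- bound ρ z in terms of d
  have hre : ((inner ℂ (z - q) (v j) : ℂ)).re ≤ d := by
    have h1 : ((inner ℂ (z - q) (v j) : ℂ)).re ≤ ‖z - q‖ * ‖v j‖ :=
      re_inner_le_norm (𝕜 := ℂ) (z - q) (v j)
    rw [hv j, mul_one, hzqnorm] at h1
    exact h1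
  have h2d1 : 2 * d ≤ 1 := by linarith
  have hτq : Cj j * ‖projPerp (v j) (z - q)‖ ^ αj j ≤ C * (2 * d) ^ α := by
    have e0 : ‖projPerp (v j) (z - q)‖ ≤ 2 * d := by
      have := norm_projPerp_le (hv j) (z - q)
      rw [hzqnorm] at this
      exact this
    have e1 : ‖projPerp (v j) (z - q)‖ ^ αj j ≤ (2 * d) ^ αj j :=
      Real.rpow_le_rpow (norm_nonneg _) e0 (hαj j).1.le
    have e2 : (2 * d) ^ αj j ≤ (2 * d) ^ α :=
      Real.rpow_le_rpow_of_exponent_ge (by positivity) h2d1 (hαle j)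
    exact mul_le_mul (hCge j) (e1.trans e2) (Real.rpow_nonneg (norm_nonneg _) _) hCpos.le
  have hρzb : ρ z ≤ d + C * (2 * d) ^ α := by
    have hk := (key z q hzV hqV).2
    linarith
  have h2db : (2 * d) ^ α ≤ b ^ α :=
    Real.rpow_le_rpow (by positivity) (by linarith) hαpos.le
  have hρzr : ρ z + d < r / 4 := by
    have h5 : C * (2 * d) ^ α ≤ C * b ^ α := mul_le_mul_of_nonneg_left h2db hCpos.le
    linarith
  -- the vertex point p0
  set p0 := z - ((ρ z : ℝ) : ℂ) • v j with hp0
  clear_value p0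
  have hX0 : p0 - p j = (z - p j) - ((ρ z : ℝ) : ℂ) • v j := by rw [hp0]; abel
  have hπp0 : projPerp (v j) (p0 - p j) = projPerp (v j) (z - p j) := by
    rw [hX0, projPerp_sub, projPerp_real_smul_self (hv j), sub_zero]
  have hrep0 : ((inner ℂ (p0 - p j) (v j) : ℂ)).re
      = ((inner ℂ (z - p j) (v j) : ℂ)).re - ρ z := by
    rw [hX0, inner_sub_left, inner_real_smul_self (hv j), Complex.sub_re, Complex.ofReal_re]
  have hρp0 : ρ p0 = 0 := by
    have h1 : ρ p0 = ((inner ℂ (p0 - p j) (v j) : ℂ)).re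
        - h j (projPerp (v j) (p0 - p j)) := by simp only [hρ]
    have h2 : ρ z = ((inner ℂ (z - p j) (v j) : ℂ)).re
        - h j (projPerp (v j) (z - p j)) := by simp only [hρ]
    rw [h1, hπp0, hrep0]
    linarith
  have hdzp0 : dist z p0 = ρ z := by
    have he : z - p0 = ((ρ z : ℝ) : ℂ) • v j := by rw [hp0]; abel
    rw [dist_eq_norm, he, norm_smul, hv j, mul_one, Complex.norm_real, Real.norm_eq_abs,
      abs_of_pos hρz]
  have hdp0q : dist p0 q ≤ ρ z + d := by
    calc dist p0 q ≤ dist p0 z + dist z q := dist_triangle _ _ _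
      _ = ρ z + d := by rw [dist_comm p0 z, hdzp0, ← hd]
  have hp0V : p0 ∈ V j := hjV (by rw [mem_ball]; linarith)
  -- p0 is a frontier point
  have hp0cl : p0 ∈ closure Ω := by
    rw [Metric.mem_closure_iff]
    intro ε' hε'
    set s := min (ε' / 2) (ρ z) with hs
    clear_value s
    have hs0 : 0 < s := by rw [hs]; exact lt_min (by positivity) hρz
    have hsρ : s ≤ ρ z := by rw [hs]; exact min_le_right _ _
    have hsε : s ≤ ε' / 2 := by rw [hs]; exact min_le_left _ _
    set w := p0 + ((s : ℝ) : ℂ) • v j with hw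
    clear_value w
    have hwp0 : dist p0 w = s := by
      have he : p0 - w = -(((s : ℝ) : ℂ) • v j) := by rw [hw]; abel
      rw [dist_eq_norm, he, norm_neg, norm_smul, hv j, mul_one, Complex.norm_real,
        Real.norm_eq_abs, abs_of_pos hs0]
    have hXw : w - p j = (p0 - p j) + ((s : ℝ) : ℂ) • v j := by rw [hw]; abel
    have hρw : ρ w = s := by
      have h1 : ρ w = ((inner ℂ (w - p j) (v j) : ℂ)).re
          - h j (projPerp (v j) (w - p j)) := by simp only [hρ]
      have h2 : ρ p0 = ((inner ℂ (p0 - p j) (v j) : ℂ)).re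
          - h j (projPerp (v j) (p0 - p j)) := by simp only [hρ]
      rw [h1, hXw, projPerp_add, projPerp_real_smul_self (hv j), add_zero, inner_add_left,
        inner_real_smul_self (hv j), Complex.add_re, Complex.ofReal_re]
      rw [h2] at hρp0
      linarith
    have hwV : w ∈ V j := hjV (by
      rw [mem_ball]
      have h3 : dist w q ≤ dist w p0 + dist p0 q := dist_triangle _ _ _
      rw [dist_comm w p0, hwp0] at h3
      linarith)
    exact ⟨w, (hiff w hwV).mpr (by rw [hρw]; exact hs0), by rw [hwp0]; linarith⟩
  have hp0fr : p0 ∈ frontier Ω := by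
    rw [hΩ.frontier_eq]
    refine ⟨hp0cl, fun hmem => ?_⟩
    have := (hiff p0 hp0V).mp hmem
    rw [hρp0] at this
    exact lt_irrefl 0 this
  refine ⟨p0, v j, ρ z, hp0fr, hv j, hρz, by rw [hp0]; abel, ?_, ?_⟩
  · -- the cusp is contained in Ω
    rintro w ⟨hwc, hwb⟩
    rw [mem_ball] at hwb
    have hwc' : C * ‖projPerp (v j) (w - p0)‖ ^ α < ((inner ℂ (w - p0) (v j) : ℂ)).re := hwc
    set τ := ‖projPerp (v j) (w - p0)‖ with hτ
    clear_value τ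
    have hτ0 : 0 ≤ τ := by rw [hτ]; exact norm_nonneg _
    have hτ1 : τ ≤ 1 := by
      have e0 : τ ≤ 2 * ‖w - p0‖ := by rw [hτ]; exact norm_projPerp_le (hv j) (w - p0)
      have e1 : ‖w - p0‖ = dist w p0 := (dist_eq_norm _ _).symm
      rw [e1] at e0
      linarith
    have hwV : w ∈ V j := hjV (by
      rw [mem_ball]
      have h3 : dist w q ≤ dist w p0 + dist p0 q := dist_triangle _ _ _
      linarith)
    have hcomp : Cj j * τ ^ αj j ≤ C * τ ^ α := by
      rcases eq_or_lt_of_le hτ0 with he | hpos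
      · rw [← he, Real.zero_rpow hαpos.ne', Real.zero_rpow (hαj j).1.ne']
        simp
      · have h1 : τ ^ αj j ≤ τ ^ α :=
          Real.rpow_le_rpow_of_exponent_ge hpos hτ1 (hαle j)
        exact mul_le_mul (hCge j) h1 (Real.rpow_nonneg hτ0 _) hCpos.le
    have hk := (key w p0 hwV hp0V).1
    rw [← hτ] at hk
    exact (hiff w hwV).mpr (by linarith)
  · rw [hdzp0]
    linarith
end

section
/- Let ψ(t) = −C₁(−log(−t))^{-β} and φ(t) = −C₂exp(−A/(−t)^{1/α−1}) for t < 0 near 0, with positive constants α ∈ (0,1), β, C₁, C₂, A, and note ψ ≤ φ < 0 near 0. Define the increasing sequence α_{ν+1} = ψ^{-1}(φ(α_ν)/2) starting from α₁ < 0 close to 0, and set a_ν = φ(α_ν) for ν odd, a_ν = ψ(α_ν) for ν even. Then a_{2ν} = a_{2ν−1}/2 and a_{2ν+1} ≥ a_{2ν}/2; in particular {a_ν} is an increasing sequence of negative numbers converging to 0. -/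
open Set Filter

/-- Let `ψ(t) = -C₁(-log(-t))^{-β}` and `φ(t) = -C₂ exp(-A/(-t)^(1/α-1))` on `(-δ,0)`,
with `ψ ≤ φ < 0` there.  Let `α_ν` be the increasing sequence defined by the recursion
`ψ(α_{ν+1}) = φ(α_ν)/2` (i.e. `α_{ν+1} = ψ⁻¹(φ(α_ν)/2)`), and set `a_ν = φ(α_ν)` for
`ν` odd, `a_ν = ψ(α_ν)` for `ν` even.  Then `a_{2ν} = a_{2ν-1}/2` and
`a_{2ν+1} ≥ a_{2ν}/2`; in particular `{a_ν}` is an increasing sequence of negative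
numbers converging to `0`. -/
theorem stmt16 (αe β C₁ C₂ A δ : ℝ) (hαe0 : 0 < αe) (hαe1 : αe < 1) (hβ : 0 < β)
    (hC₁ : 0 < C₁) (hC₂ : 0 < C₂) (hA : 0 < A) (hδ : 0 < δ)
    (ψ φ : ℝ → ℝ)
    (hψ : ∀ t ∈ Ioo (-δ) 0, ψ t = -C₁ * (-Real.log (-t)) ^ (-β))
    (hφ : ∀ t ∈ Ioo (-δ) 0, φ t = -C₂ * Real.exp (-A / (-t) ^ (1 / αe - 1)))
    (hord : ∀ t ∈ Ioo (-δ) 0, ψ t ≤ φ t ∧ φ t < 0)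
    (α : ℕ → ℝ) (hmem : ∀ ν, 1 ≤ ν → α ν ∈ Ioo (-δ) 0)
    (hrec : ∀ ν, 1 ≤ ν → ψ (α (ν + 1)) = φ (α ν) / 2)
    (a : ℕ → ℝ) (ha : ∀ ν, 1 ≤ ν → a ν = if Odd ν then φ (α ν) else ψ (α ν)) :
    (∀ ν, 1 ≤ ν → a (2 * ν) = a (2 * ν - 1) / 2) ∧
    (∀ ν, 1 ≤ ν → a (2 * ν) / 2 ≤ a (2 * ν + 1)) ∧
    (∀ ν, 1 ≤ ν → a ν < a (ν + 1) ∧ a ν < 0) ∧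
    Tendsto a atTop (nhds 0) := by

  -- `a ν` is negative
  have hneg : ∀ ν, 1 ≤ ν → a ν < 0 := by
    intro ν hν
    rw [ha ν hν]
    have ho := hord _ (hmem ν hν)
    split_ifs
    · exact ho.2
    · exact lt_of_le_of_lt ho.1 ho.2
  -- key step: `a ν / 2 ≤ a (ν+1)`, with equality when `ν` is odd
  have hstep : ∀ ν, 1 ≤ ν → a ν / 2 ≤ a (ν + 1) := by
    intro ν hν
    have hm := hmem ν hν
    have hm1 := hmem (ν + 1) (by omega)
    have hr := hrec ν hν
    have ho := hord _ hm
    have ho1 := hord _ hm1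
    rcases Nat.even_or_odd ν with he | hodd
    · rw [ha ν hν, ha (ν + 1) (by omega), if_neg (by simpa using he),
        if_pos (by simpa [Nat.odd_add_one] using he)]
      calc ψ (α ν) / 2 ≤ φ (α ν) / 2 := by linarith [ho.1]
        _ = ψ (α (ν + 1)) := hr.symm
        _ ≤ φ (α (ν + 1)) := ho1.1
    · rw [ha ν hν, ha (ν + 1) (by omega), if_pos hodd,
        if_neg (by simp [Nat.odd_add_one, hodd])]
      rw [hr]
  have heq : ∀ ν, 1 ≤ ν → a (2 * ν) = a (2 * ν - 1) / 2 := by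
    intro ν hν
    have h1 : (1 : ℕ) ≤ 2 * ν - 1 := by omega
    have h2 : 2 * ν = (2 * ν - 1) + 1 := by omega
    have hodd : Odd (2 * ν - 1) := ⟨ν - 1, by omega⟩
    have heven : ¬ Odd (2 * ν) := by simp
    rw [ha (2 * ν) (by omega), if_neg heven, ha (2 * ν - 1) h1, if_pos hodd,
      h2, hrec _ h1]
    simp
  refine ⟨heq, fun ν hν => hstep (2 * ν) (by omega), fun ν hν => ⟨?_, hneg ν hν⟩, ?_⟩
  · have h1 := hstep ν hν
    have h2 := hneg ν hν
    linarith
  -- convergence: squeeze `a (n+1)` between `a 1 / 2^n` and `0`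
  have hlb : ∀ n : ℕ, a 1 / 2 ^ n ≤ a (n + 1) := by
    intro n
    induction n with
    | zero => simp
    | succ n ih =>
      have := hstep (n + 1) (by omega)
      have h2 : a 1 / 2 ^ (n + 1) = (a 1 / 2 ^ n) / 2 := by
        rw [pow_succ]; ring
      rw [h2]
      linarith
  have hlow : Tendsto (fun n : ℕ => a 1 / 2 ^ n) atTop (nhds 0) := by
    have h := tendsto_pow_atTop_nhds_zero_of_lt_one
      (by norm_num : (0:ℝ) ≤ 1/2) (by norm_num : (1:ℝ)/2 < 1)
    have := h.const_mul (a 1)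
    simpa [div_pow, div_eq_mul_inv, inv_pow] using this
  have hb : Tendsto (fun n : ℕ => a (n + 1)) atTop (nhds 0) :=
    tendsto_of_tendsto_of_tendsto_of_le_of_le hlow tendsto_const_nhds hlb
      (fun n => (hneg (n + 1) (by omega)).le)
  exact (tendsto_add_atTop_iff_nat 1).mp hb
end

section
/- Let {a_ν} be an increasing sequence of negative reals with a_ν → 0 satisfying a_{ν+1} ≥ a_ν/2 for all ν. Define τ : (−∞,0) → [0,∞) by τ(x) = 0 for x ≤ a₁ and τ(x) = ν − Σ_{k=1}^{ν−1} a_{k+1}/a_k − x/a_ν for a_ν ≤ x ≤ a_{ν+1}. Then τ is a well-defined convex nondecreasing function, τ(a_{ν+1}) − τ(a_ν) = 1 − a_{ν+1}/a_ν ∈ [1/2, 1), and consequently τ(a_ν) ≥ ν/2 − c₀ for some constant c₀ > 0. -/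
open Set Filter

/-- Let `{a_ν}` (ν ≥ 1) be an increasing sequence of negative reals with `a_ν → 0` and
`a_{ν+1} ≥ a_ν/2`.  The function `τ` defined by `τ(x) = 0` for `x ≤ a₁` and
`τ(x) = ν - Σ_{k=1}^{ν-1} a_{k+1}/a_k - x/a_ν` on `[a_ν, a_{ν+1}]` is a well-defined
convex nondecreasing function on `(-∞,0)` with
`τ(a_{ν+1}) - τ(a_ν) = 1 - a_{ν+1}/a_ν ∈ [1/2, 1)`, and consequently
`τ(a_ν) ≥ ν/2 - c₀` for some constant `c₀ > 0`. -/
theorem stmt17 (a : ℕ → ℝ)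
    (hneg : ∀ ν, 1 ≤ ν → a ν < 0)
    (hmono : ∀ ν, 1 ≤ ν → a ν < a (ν + 1))
    (hlim : Tendsto a atTop (nhds 0))
    (hhalf : ∀ ν, 1 ≤ ν → a ν / 2 ≤ a (ν + 1))
    (τ : ℝ → ℝ)
    (hτ0 : ∀ x : ℝ, x ≤ a 1 → τ x = 0)
    (hτ : ∀ ν, 1 ≤ ν → ∀ x ∈ Icc (a ν) (a (ν + 1)),
      τ x = ν - (∑ k ∈ Finset.Icc 1 (ν - 1), a (k + 1) / a k) - x / a ν) :
    ConvexOn ℝ (Iio (0 : ℝ)) τ ∧ MonotoneOn τ (Iio (0 : ℝ)) ∧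
    (∀ ν, 1 ≤ ν → τ (a (ν + 1)) - τ (a ν) = 1 - a (ν + 1) / a ν ∧
      (1 - a (ν + 1) / a ν) ∈ Ico (1 / 2 : ℝ) 1) ∧
    ∃ c₀ > 0, ∀ ν : ℕ, 1 ≤ ν → (ν : ℝ) / 2 - c₀ ≤ τ (a ν) := by
  classical
  have hne : ∀ ν, 1 ≤ ν → a ν ≠ 0 := fun ν hν => ne_of_lt (hneg ν hν)
  have hmono' : ∀ i j, 1 ≤ i → i ≤ j → a i ≤ a j := by
    intro i j hi hij
    induction j, hij using Nat.le_induction with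
    | base => exact le_refl _
    | succ j hj ih => exact ih.trans (hmono j (hi.trans hj)).le
  -- the affine pieces
  set L : ℕ → ℝ → ℝ :=
    fun ν x => (ν : ℝ) - (∑ k ∈ Finset.Icc 1 (ν - 1), a (k + 1) / a k) - x / a ν with hLdef
  have hLe : ∀ ν x, L ν x
      = (ν : ℝ) - (∑ k ∈ Finset.Icc 1 (ν - 1), a (k + 1) / a k) - x / a ν := fun _ _ => rfl
  have hτL : ∀ ν, 1 ≤ ν → ∀ x ∈ Icc (a ν) (a (ν + 1)), τ x = L ν x := by
    intro ν hν x hx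
    rw [hLe]; exact hτ ν hν x hx
  -- sum recurrence
  have hsum : ∀ ν, 1 ≤ ν → (∑ k ∈ Finset.Icc 1 ν, a (k + 1) / a k)
      = (∑ k ∈ Finset.Icc 1 (ν - 1), a (k + 1) / a k) + a (ν + 1) / a ν := by
    intro ν hν
    obtain ⟨m, rfl⟩ : ∃ m, ν = m + 1 := ⟨ν - 1, (Nat.succ_pred_eq_of_pos hν).symm⟩
    rw [Finset.sum_Icc_succ_top (by omega)]
    rfl
  -- key difference identity between adjacent pieces
  have hdiff : ∀ ν, 1 ≤ ν → ∀ x : ℝ,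
      L (ν + 1) x - L ν x = (x - a (ν + 1)) * (1 / a ν - 1 / a (ν + 1)) := by
    intro ν hν x
    have h1 := hne ν hν
    have h2 := hne (ν + 1) (by omega)
    rw [hLe, hLe]
    have hν1 : (ν + 1 : ℕ) - 1 = ν := by omega
    rw [hν1, hsum ν hν]
    push_cast
    field_simp
    ring
  -- the slope factor is nonnegative
  have hfac : ∀ ν, 1 ≤ ν → 0 ≤ 1 / a ν - 1 / a (ν + 1) := by
    intro ν hν
    have h0 := hneg ν hν
    have h1 := hneg (ν + 1) (by omega)
    have heq : 1 / a ν - 1 / a (ν + 1) = (a (ν + 1) - a ν) / (a ν * a (ν + 1)) := by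
      field_simp [hne ν hν, hne (ν + 1) (by omega : 1 ≤ ν + 1)]
    rw [heq]
    exact div_nonneg (by linarith [hmono ν hν]) (mul_pos_of_neg_of_neg h0 h1).le
  -- going up in index to the right of the breakpoint
  have lemA : ∀ ν, 1 ≤ ν → ∀ x : ℝ, a (ν + 1) ≤ x → L ν x ≤ L (ν + 1) x := by
    intro ν hν x hx
    have h2 := mul_nonneg (sub_nonneg.mpr hx) (hfac ν hν)
    rw [← hdiff ν hν x] at h2
    exact sub_nonneg.mp h2
  -- going up in index to the left of the breakpoint
  have lemB : ∀ ν, 1 ≤ ν → ∀ x : ℝ, x ≤ a (ν + 1) → L (ν + 1) x ≤ L ν x := by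
    intro ν hν x hx
    have h2 : (x - a (ν + 1)) * (1 / a ν - 1 / a (ν + 1)) ≤ 0 :=
      mul_nonpos_iff.mpr (Or.inr ⟨sub_nonpos.mpr hx, hfac ν hν⟩)
    rw [← hdiff ν hν x] at h2
    exact sub_nonpos.mp h2
  -- value of the first piece
  have hL1e : ∀ x : ℝ, L 1 x = 1 - x / a 1 := by
    intro x
    rw [hLe]
    norm_num
  have hL1 : ∀ x : ℝ, a 1 ≤ x → 0 ≤ L 1 x := by
    intro x hx
    rw [hL1e]
    have h0 := hneg 1 le_rfl
    have : x / a 1 ≤ 1 := by rw [div_le_iff_of_neg h0]; linarith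
    linarith
  have hL1' : ∀ x : ℝ, x ≤ a 1 → L 1 x ≤ 0 := by
    intro x hx
    rw [hL1e]
    have h0 := hneg 1 le_rfl
    have : (1 : ℝ) ≤ x / a 1 := by rw [le_div_iff_of_neg h0]; linarith
    linarith
  -- chains
  have chainUp : ∀ i, 1 ≤ i → ∀ j, i ≤ j → ∀ x : ℝ, a j ≤ x → L i x ≤ L j x := by
    intro i hi j hij x
    induction j, hij using Nat.le_induction with
    | base => intro _; exact le_refl _
    | succ j hj ih =>
      intro hx
      have haj : a j ≤ x := (hmono' j (j + 1) (hi.trans hj) (by omega)).trans hx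
      exact (ih haj).trans (lemA j (hi.trans hj) x hx)
  have chainDown : ∀ i, 1 ≤ i → ∀ j, i ≤ j → ∀ x : ℝ, x ≤ a (i + 1) → L j x ≤ L i x := by
    intro i hi j hij x hx
    induction j, hij using Nat.le_induction with
    | base => exact le_refl _
    | succ j hj ih =>
      have hxj : x ≤ a (j + 1) := hx.trans (hmono' (i + 1) (j + 1) (by omega) (by omega))
      exact (lemB j (hi.trans hj) x hxj).trans ih
  -- the key lemma: location in a piece and dominance of all lines
  have hkey : ∀ x : ℝ, x < 0 →
      (0 ≤ τ x ∧ ∀ μ, 1 ≤ μ → L μ x ≤ τ x) ∧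
      (τ x = 0 ∨ ∃ ν, 1 ≤ ν ∧ a ν ≤ x ∧ x ≤ a (ν + 1) ∧ τ x = L ν x) := by
    intro x hx
    by_cases hx1 : x ≤ a 1
    · have hτx : τ x = 0 := hτ0 x hx1
      refine ⟨⟨by rw [hτx], ?_⟩, Or.inl hτx⟩
      intro μ hμ
      rw [hτx]
      have hx2 : x ≤ a 2 := hx1.trans (hmono 1 le_rfl).le
      exact (chainDown 1 le_rfl μ hμ x hx2).trans (hL1' x hx1)
    · push_neg at hx1
      have hex : ∃ n, x < a (n + 1) := by
        have h := (hlim.eventually (eventually_gt_nhds hx)).exists_forall_of_atTop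
        obtain ⟨N, hN⟩ := h
        exact ⟨N, hN (N + 1) (by omega)⟩
      have hpiece : ∃ m, 1 ≤ m ∧ a m ≤ x ∧ x < a (m + 1) := by
        have hm2 : x < a (Nat.find hex + 1) := Nat.find_spec hex
        have hm1 : 1 ≤ Nat.find hex := by
          rcases Nat.eq_zero_or_pos (Nat.find hex) with h | h
          · exfalso; rw [h] at hm2; exact absurd hm2 (not_lt.mpr hx1.le)
          · exact h
        refine ⟨Nat.find hex, hm1, ?_, hm2⟩
        have h := Nat.find_min hex (show Nat.find hex - 1 < Nat.find hex by omega)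
        push_neg at h
        have heq : Nat.find hex - 1 + 1 = Nat.find hex := by omega
        rwa [heq] at h
      obtain ⟨m, hm1, hml, hm2⟩ := hpiece
      have hτx : τ x = L m x := hτL m hm1 x ⟨hml, hm2.le⟩
      refine ⟨⟨?_, ?_⟩, Or.inr ⟨m, hm1, hml, hm2.le, hτx⟩⟩
      · rw [hτx]
        exact (hL1 x hx1.le).trans (chainUp 1 le_rfl m hm1 x hml)
      · intro μ hμ
        rw [hτx]
        rcases le_total μ m with h | h
        · exact chainUp μ hμ m h x hml
        · exact chainDown m hm1 μ h x hm2.le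
  -- monotonicity of each line
  have hLmono : ∀ ν, 1 ≤ ν → ∀ x y : ℝ, x ≤ y → L ν x ≤ L ν y := by
    intro ν hν x y hxy
    have h0 := hneg ν hν
    have h1 : (a ν)⁻¹ < 0 := inv_lt_zero.mpr h0
    have : y * (a ν)⁻¹ ≤ x * (a ν)⁻¹ := (mul_le_mul_right_of_neg h1).mpr hxy
    rw [hLe, hLe, div_eq_mul_inv, div_eq_mul_inv]
    linarith
  -- convexity
  have hconv : ConvexOn ℝ (Iio (0 : ℝ)) τ := by
    refine ⟨convex_Iio 0, ?_⟩
    intro x hx y hy t s ht hs hts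
    simp only [smul_eq_mul]
    have hxn : x < 0 := hx
    have hyn : y < 0 := hy
    have hz : t * x + s * y < 0 := by
      rcases lt_or_eq_of_le ht with h | h
      · have h1 : t * x < 0 := mul_neg_of_pos_of_neg h hxn
        have h2 : s * y ≤ 0 := mul_nonpos_iff.mpr (Or.inl ⟨hs, hyn.le⟩)
        linarith
      · have hs1 : s = 1 := by linarith
        rw [← h, hs1]; simpa using hyn
    obtain ⟨-, hcase⟩ := hkey (t * x + s * y) hz
    rcases hcase with hτz | ⟨ν, hν, -, -, hτz⟩
    · rw [hτz]
      have h1 := (hkey x hxn).1.1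
      have h2 := (hkey y hyn).1.1
      exact add_nonneg (mul_nonneg ht h1) (mul_nonneg hs h2)
    · rw [hτz]
      have hx' := (hkey x hxn).1.2 ν hν
      have hy' := (hkey y hyn).1.2 ν hν
      have heq : L ν (t * x + s * y) = t * L ν x + s * L ν y := by
        rw [hLe, hLe, hLe]
        linear_combination (-((ν : ℝ) - (∑ k ∈ Finset.Icc 1 (ν - 1), a (k + 1) / a k))) * hts
      rw [heq]
      exact add_le_add (mul_le_mul_of_nonneg_left hx' ht) (mul_le_mul_of_nonneg_left hy' hs)
  -- monotonicity
  have hmonoτ : MonotoneOn τ (Iio (0 : ℝ)) := by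
    intro x hx y hy hxy
    obtain ⟨⟨hy0, hyub⟩, -⟩ := hkey y hy
    obtain ⟨-, hcase⟩ := hkey x hx
    rcases hcase with hτx | ⟨ν, hν, -, -, hτx⟩
    · rw [hτx]; exact hy0
    · rw [hτx]
      exact (hLmono ν hν x y hxy).trans (hyub ν hν)
  -- the step formula
  have hstep : ∀ ν, 1 ≤ ν → τ (a (ν + 1)) - τ (a ν) = 1 - a (ν + 1) / a ν ∧
      (1 - a (ν + 1) / a ν) ∈ Ico (1 / 2 : ℝ) 1 := by
    intro ν hν
    have h0 := hneg ν hν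
    have h1 := hneg (ν + 1) (by omega)
    have hmem1 : a ν ∈ Icc (a ν) (a (ν + 1)) := ⟨le_rfl, (hmono ν hν).le⟩
    have hmem2 : a (ν + 1) ∈ Icc (a ν) (a (ν + 1)) := ⟨(hmono ν hν).le, le_rfl⟩
    have e1 := hτ ν hν _ hmem1
    have e2 := hτ ν hν _ hmem2
    have hself : a ν / a ν = 1 := div_self (ne_of_lt h0)
    refine ⟨by rw [e1, e2, hself]; ring, ?_, ?_⟩
    · have : a (ν + 1) / a ν ≤ 1 / 2 := by
        rw [div_le_iff_of_neg h0]; linarith [hhalf ν hν]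
      linarith
    · have : 0 < a (ν + 1) / a ν := div_pos_iff.mpr (Or.inr ⟨h1, h0⟩)
      linarith
  -- lower bound with c₀ = 1
  have hlow : ∀ ν : ℕ, 1 ≤ ν → ((ν : ℝ) - 1) / 2 ≤ τ (a ν) := by
    intro ν hν
    induction ν, hν using Nat.le_induction with
    | base => rw [hτ0 (a 1) le_rfl]; norm_num
    | succ ν hν ih =>
      obtain ⟨he, hm⟩ := hstep ν hν
      have h1 := hm.1
      push_cast
      push_cast at ih
      linarith
  refine ⟨hconv, hmonoτ, hstep, 1, one_pos, ?_⟩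
  intro ν hν
  have := hlow ν hν
  linarith
end

section
/- Let Γ̄ = {z ∈ ℂ^n : Im z_n ≥ C(|z'|² + (Re z_n)²)^{α/2}} be a closed cusp in ℂ^n = ℝ^{2n} with C > 0, 0 < α < 1, and n ≥ 2. Then Γ̄ is thin at the vertex 0; equivalently, the Wiener series Σ_{k≥1} 2^{k(2n−2)} Cap(E_k) converges, where E_k = Γ̄ ∩ {2^{-k-1} ≤ |z| ≤ 2^{-k}} and Cap denotes the Newtonian (variational Dirichlet) capacity in ℝ^{2n}. -/
open MeasureTheory

/-- The Newtonian (variational Dirichlet) capacity of a set `K ⊆ ℝᵐ`: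
`Cap(K) = inf {∫ |∇φ|² : φ ∈ C¹₀(ℝᵐ), φ ≥ 1 on K}`. -/
noncomputable def newtonianCap (m : ℕ) (K : Set (EuclideanSpace ℝ (Fin m))) : ℝ :=
  sInf {t : ℝ | ∃ φ : EuclideanSpace ℝ (Fin m) → ℝ, ContDiff ℝ 1 φ ∧
    HasCompactSupport φ ∧ (∀ x ∈ K, 1 ≤ φ x) ∧ t = ∫ x, ‖fderiv ℝ φ x‖ ^ 2}


open Metric Set

namespace Stmt18Aux

variable {m : ℕ}

noncomputable def TN (N : Fin m) : EuclideanSpace ℝ (Fin m) →L[ℝ] EuclideanSpace ℝ (Fin m) :=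
  (EuclideanSpace.proj N).smulRight (EuclideanSpace.single N 1)

noncomputable def projP (N : Fin m) : EuclideanSpace ℝ (Fin m) →L[ℝ] EuclideanSpace ℝ (Fin m) :=
  ContinuousLinearMap.id ℝ _ - TN N

lemma TN_apply (N : Fin m) (x : EuclideanSpace ℝ (Fin m)) (i : Fin m) :
    TN N x i = if i = N then x N else 0 := by
  have : TN N x = x N • EuclideanSpace.single N (1:ℝ) := rfl
  rw [this]
  simp only [PiLp.smul_apply, smul_eq_mul, EuclideanSpace.single_apply]
  split <;> simp

lemma projP_apply (N : Fin m) (x : EuclideanSpace ℝ (Fin m)) (i : Fin m) :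
    projP N x i = if i = N then 0 else x i := by
  have : projP N x = x - TN N x := rfl
  rw [this]
  simp only [PiLp.sub_apply, TN_apply]
  split
  · rename_i hi; subst hi; ring
  · ring

lemma normsq (x : EuclideanSpace ℝ (Fin m)) : ‖x‖ ^ 2 = ∑ i, x i ^ 2 := by
  rw [EuclideanSpace.norm_eq, Real.sq_sqrt (by positivity)]
  simp [Real.norm_eq_abs, sq_abs]

lemma normsq_projP (N : Fin m) (x : EuclideanSpace ℝ (Fin m)) :
    ‖projP N x‖ ^ 2 = ‖x‖ ^ 2 - x N ^ 2 := by
  rw [normsq, normsq, eq_sub_iff_add_eq]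
  have h : ∀ i : Fin m, projP N x i ^ 2 + (if i = N then x N ^ 2 else 0) = x i ^ 2 := by
    intro i
    rw [projP_apply]
    split
    · rename_i hi; subst hi; ring
    · ring
  calc ∑ i, projP N x i ^ 2 + x N ^ 2
      = ∑ i, (projP N x i ^ 2 + if i = N then x N ^ 2 else 0) := by
        rw [Finset.sum_add_distrib, Finset.sum_ite_eq' Finset.univ N]
        simp
    _ = ∑ i, x i ^ 2 := by simp_rw [h]

lemma norm_projP_le (N : Fin m) (x : EuclideanSpace ℝ (Fin m)) : ‖projP N x‖ ≤ ‖x‖ := by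
  have h := normsq_projP N x
  nlinarith [norm_nonneg (projP N x), norm_nonneg x, sq_nonneg (x N)]

lemma abs_coord_le (N : Fin m) (x : EuclideanSpace ℝ (Fin m)) : |x N| ≤ ‖x‖ := by
  have h := normsq_projP N x
  have h2 : |x N| ^ 2 ≤ ‖x‖ ^ 2 := by rw [sq_abs]; nlinarith [norm_nonneg (projP N x)]
  nlinarith [abs_nonneg (x N), norm_nonneg x]

lemma norm_TN (N : Fin m) (x : EuclideanSpace ℝ (Fin m)) : ‖TN N x‖ = |x N| := by
  have : TN N x = x N • EuclideanSpace.single N (1:ℝ) := rfl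
  rw [this, norm_smul, EuclideanSpace.norm_single]
  simp [Real.norm_eq_abs]

lemma abs_coord_le_projP (N : Fin m) (x : EuclideanSpace ℝ (Fin m)) {i : Fin m} (h : i ≠ N) :
    |x i| ≤ ‖projP N x‖ := by
  have h1 : x i ^ 2 ≤ ‖projP N x‖ ^ 2 := by
    rw [normsq]
    have := Finset.single_le_sum (f := fun j => projP N x j ^ 2)
      (fun j _ => sq_nonneg _) (Finset.mem_univ i)
    simp only [if_neg h] at this
    calc x i ^ 2 = projP N x i ^ 2 := by rw [projP_apply, if_neg h]
      _ ≤ _ := Finset.single_le_sum (f := fun j => projP N x j ^ 2)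
          (fun j _ => sq_nonneg _) (Finset.mem_univ i)
  have := abs_nonneg (x i); have := norm_nonneg (projP N x)
  nlinarith [sq_abs (x i)]

lemma projP_idem (N : Fin m) (x : EuclideanSpace ℝ (Fin m)) : projP N (projP N x) = projP N x := by
  ext i
  simp only [projP_apply]
  split <;> simp

lemma projP_TN (N : Fin m) (x : EuclideanSpace ℝ (Fin m)) : projP N (TN N x) = 0 := by
  ext i
  simp only [projP_apply, TN_apply]
  split <;> simp_all

lemma TN_coord (N : Fin m) (x : EuclideanSpace ℝ (Fin m)) : TN N x N = x N := by
  rw [TN_apply]; simp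

lemma projP_coord (N : Fin m) (x : EuclideanSpace ℝ (Fin m)) : projP N x N = 0 := by
  rw [projP_apply]; simp

end Stmt18Aux

namespace Stmt18Aux

lemma exists_D (m : ℕ) (N : Fin m) : ∃ D : ℝ, 0 ≤ D ∧ ∀ (ρ s : ℝ), 0 < ρ → 0 < s →
    ∀ K : Set (EuclideanSpace ℝ (Fin m)),
      (∀ x ∈ K, ‖projP N x‖ ≤ ρ ∧ |x N| ≤ s) →
      0 ≤ newtonianCap m K ∧
        newtonianCap m K ≤ D * ((ρ⁻¹ + s⁻¹) ^ 2 * (ρ ^ (m - 1) * s)) := by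
  classical
  set E := EuclideanSpace ℝ (Fin m)
  set Φ : ContDiffBump (0 : E) := ⟨1, 2, one_pos, one_lt_two⟩ with hΦ
  set Φ1 : ContDiffBump (0 : ℝ) := ⟨1, 2, one_pos, one_lt_two⟩ with hΦ1
  set G : E → ℝ := fun y => Φ (projP N y) * Φ1 (y N) with hG
  have hGdiff : ContDiff ℝ 1 G :=
    (Φ.contDiff.comp (projP N).contDiff).mul (Φ1.contDiff.comp (EuclideanSpace.proj (𝕜 := ℝ) N).contDiff)
  have hGsupp : HasCompactSupport G := by
    apply HasCompactSupport.intro (isCompact_closedBall (0 : E) 3)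
    intro x hx
    by_contra hGx
    apply hx
    have h1 : Φ (projP N x) ≠ 0 ∧ Φ1 (x N) ≠ 0 := mul_ne_zero_iff.mp hGx
    have h2 : projP N x ∈ Function.support Φ := h1.1
    have h3 : (x N) ∈ Function.support Φ1 := h1.2
    rw [Φ.support_eq] at h2
    rw [Φ1.support_eq] at h3
    have h4 : ‖projP N x‖ < 2 := by simpa [hΦ] using mem_ball_zero_iff.mp h2
    have h5 : |x N| < 2 := by
      have h5' : ‖x N‖ < 2 := mem_ball_zero_iff.mp h3
      rwa [Real.norm_eq_abs] at h5'
    have h4' : ‖projP N x‖ ^ 2 < 4 := by nlinarith [norm_nonneg (projP N x)]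
    have h5' : x N ^ 2 < 4 := by nlinarith [abs_nonneg (x N), sq_abs (x N)]
    have h6 : ‖x‖ ^ 2 ≤ 3 ^ 2 := by nlinarith [normsq_projP N x]
    have : ‖x‖ ≤ 3 := by nlinarith [norm_nonneg x]
    simpa [mem_closedBall_zero_iff] using this
  obtain ⟨D₀, hD₀⟩ :=
    (hGdiff.continuous_fderiv one_ne_zero).bounded_above_of_compact_support (hGsupp.fderiv (𝕜 := ℝ))
  set D1 : ℝ := max D₀ 0 with hD1
  have hD1nn : 0 ≤ D1 := le_max_right _ _
  have hD1b : ∀ y, ‖fderiv ℝ G y‖ ≤ D1 := fun y => (hD₀ y).trans (le_max_left _ _)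
  refine ⟨D1 ^ 2 * (4 ^ (m - 1) * 4), by positivity, ?_⟩
  intro ρ s hρ hs K hK
  -- the rescaling map
  set A : E →L[ℝ] E := ρ⁻¹ • projP N + s⁻¹ • TN N with hA
  have hAP : ∀ x, projP N (A x) = ρ⁻¹ • projP N x := by
    intro x
    have : A x = ρ⁻¹ • projP N x + s⁻¹ • TN N x := rfl
    rw [this, map_add, (projP N).map_smul, (projP N).map_smul, projP_idem, projP_TN,
      smul_zero, add_zero]
  have hAN : ∀ x, (A x) N = s⁻¹ * x N := by
    intro x
    have : A x = ρ⁻¹ • projP N x + s⁻¹ • TN N x := rfl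
    rw [this]
    have : (ρ⁻¹ • projP N x + s⁻¹ • TN N x : E) N
        = ρ⁻¹ * projP N x N + s⁻¹ * TN N x N := rfl
    rw [this, projP_coord, TN_coord]
    ring
  set φ : E → ℝ := fun x => G (A x) with hφ
  have hφeq : ∀ x, φ x = Φ (ρ⁻¹ • projP N x) * Φ1 (s⁻¹ * x N) := by
    intro x
    simp only [hφ, hG]
    rw [hAP, hAN]
  have hφdiff : ContDiff ℝ 1 φ := hGdiff.comp A.contDiff
  -- φ = 1 on K
  have hφ1 : ∀ x ∈ K, 1 ≤ φ x := by
    intro x hx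
    obtain ⟨hx1, hx2⟩ := hK x hx
    rw [hφeq]
    have e1 : Φ (ρ⁻¹ • projP N x) = 1 := by
      apply Φ.one_of_mem_closedBall
      rw [mem_closedBall_zero_iff, norm_smul]
      have : ‖ρ⁻¹‖ = ρ⁻¹ := by rw [Real.norm_eq_abs, abs_of_pos (by positivity)]
      rw [this]
      calc ρ⁻¹ * ‖projP N x‖ ≤ ρ⁻¹ * ρ := by
            apply mul_le_mul_of_nonneg_left hx1 (by positivity)
        _ = 1 := inv_mul_cancel₀ hρ.ne'
    have e2 : Φ1 (s⁻¹ * x N) = 1 := by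
      apply Φ1.one_of_mem_closedBall
      rw [mem_closedBall_zero_iff, Real.norm_eq_abs, abs_mul, abs_of_pos (by positivity : (0:ℝ) < s⁻¹)]
      calc s⁻¹ * |x N| ≤ s⁻¹ * s := mul_le_mul_of_nonneg_left hx2 (by positivity)
        _ = 1 := inv_mul_cancel₀ hs.ne'
    rw [e1, e2, one_mul]
  -- support control
  set Sbox : Set E := {x | ‖projP N x‖ ≤ 2 * ρ ∧ |x N| ≤ 2 * s} with hSbox
  have hSboxClosed : IsClosed Sbox := by
    apply IsClosed.inter
    · exact isClosed_le ((projP N).continuous.norm) continuous_const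
    · exact isClosed_le ((EuclideanSpace.proj (𝕜 := ℝ) N).continuous.abs) continuous_const
  have hsupp : Function.support φ ⊆ Sbox := by
    intro x hx
    have hx' : φ x ≠ 0 := hx
    rw [hφeq] at hx'
    have h1 : Φ (ρ⁻¹ • projP N x) ≠ 0 ∧ Φ1 (s⁻¹ * x N) ≠ 0 := mul_ne_zero_iff.mp hx'
    have h2 : ρ⁻¹ • projP N x ∈ Function.support Φ := h1.1
    have h3 : s⁻¹ * x N ∈ Function.support Φ1 := h1.2
    rw [Φ.support_eq] at h2
    rw [Φ1.support_eq] at h3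
    have h4 : ‖ρ⁻¹ • projP N x‖ < 2 := by simpa [hΦ] using mem_ball_zero_iff.mp h2
    have h5 : |s⁻¹ * x N| < 2 := by
      have h5' : ‖s⁻¹ * x N‖ < 2 := mem_ball_zero_iff.mp h3
      rwa [Real.norm_eq_abs] at h5'
    constructor
    · rw [norm_smul, Real.norm_eq_abs, abs_of_pos (by positivity : (0:ℝ) < ρ⁻¹)] at h4
      calc ‖projP N x‖ = ρ * (ρ⁻¹ * ‖projP N x‖) := by field_simp
        _ ≤ ρ * 2 := mul_le_mul_of_nonneg_left h4.le hρ.le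
        _ = 2 * ρ := by ring
    · rw [abs_mul, abs_of_pos (by positivity : (0:ℝ) < s⁻¹)] at h5
      calc |x N| = s * (s⁻¹ * |x N|) := by field_simp
        _ ≤ s * 2 := mul_le_mul_of_nonneg_left h5.le hs.le
        _ = 2 * s := by ring
  have htsupp : tsupport φ ⊆ Sbox := closure_minimal hsupp hSboxClosed
  have hφcs : HasCompactSupport φ := by
    apply HasCompactSupport.intro (isCompact_closedBall (0 : E) (2 * ρ + 2 * s))
    intro x hx
    by_contra hφx
    apply hx
    obtain ⟨h1, h2⟩ := hsupp hφx
    have h3 := normsq_projP N x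
    have : ‖x‖ ≤ 2 * ρ + 2 * s := by
      nlinarith [norm_nonneg x, norm_nonneg (projP N x), abs_nonneg (x N), sq_abs (x N)]
    simpa [mem_closedBall_zero_iff] using this
  -- operator norm of A
  have hAnorm : ‖A‖ ≤ ρ⁻¹ + s⁻¹ := by
    apply ContinuousLinearMap.opNorm_le_bound _ (by positivity)
    intro x
    have hAx : A x = ρ⁻¹ • projP N x + s⁻¹ • TN N x := rfl
    rw [hAx]
    calc ‖ρ⁻¹ • projP N x + s⁻¹ • TN N x‖
        ≤ ‖ρ⁻¹ • projP N x‖ + ‖s⁻¹ • TN N x‖ := norm_add_le _ _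
      _ = ρ⁻¹ * ‖projP N x‖ + s⁻¹ * ‖TN N x‖ := by
          rw [norm_smul, norm_smul, Real.norm_eq_abs, Real.norm_eq_abs,
            abs_of_pos (by positivity : (0:ℝ) < ρ⁻¹), abs_of_pos (by positivity : (0:ℝ) < s⁻¹)]
      _ ≤ ρ⁻¹ * ‖x‖ + s⁻¹ * ‖x‖ := by
          have h1 := norm_projP_le N x
          have h2 := norm_TN N x
          have h3 := abs_coord_le N x
          have hi1 : (0:ℝ) ≤ ρ⁻¹ := by positivity
          have hi2 : (0:ℝ) ≤ s⁻¹ := by positivity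
          rw [h2]
          exact add_le_add (mul_le_mul_of_nonneg_left h1 hi1)
            (mul_le_mul_of_nonneg_left h3 hi2)
      _ = (ρ⁻¹ + s⁻¹) * ‖x‖ := by ring
  -- pointwise derivative bound
  have hfd : ∀ x, ‖fderiv ℝ φ x‖ ≤ D1 * (ρ⁻¹ + s⁻¹) := by
    intro x
    have hcomp : fderiv ℝ φ x = (fderiv ℝ G (A x)).comp (A : E →L[ℝ] E) := by
      have h1 : fderiv ℝ (G ∘ A) x = (fderiv ℝ G (A x)).comp (fderiv ℝ A x) :=
        fderiv_comp x (hGdiff.differentiable one_ne_zero _) A.differentiableAt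
      rw [A.fderiv] at h1
      exact h1
    rw [hcomp]
    calc ‖(fderiv ℝ G (A x)).comp (A : E →L[ℝ] E)‖
        ≤ ‖fderiv ℝ G (A x)‖ * ‖(A : E →L[ℝ] E)‖ := ContinuousLinearMap.opNorm_comp_le _ _
      _ ≤ D1 * (ρ⁻¹ + s⁻¹) := mul_le_mul (hD1b _) hAnorm (norm_nonneg _) hD1nn
  -- the enclosing box and its volume
  set L : Fin m → ℝ := fun i => if i = N then 2 * s else 2 * ρ with hL
  set Box : Set E := {x | ∀ i, x i ∈ Icc (-(L i)) (L i)} with hBox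
  have hBoxEq : Box = (MeasurableEquiv.toLp 2 (Fin m → ℝ)).symm ⁻¹'
      (Set.univ.pi fun i => Icc (-(L i)) (L i)) := by
    ext x
    simp only [hBox, Set.mem_preimage, Set.mem_pi, Set.mem_univ, true_implies, Set.mem_setOf_eq]
    exact Iff.rfl
  have hBoxMeas : MeasurableSet Box := by
    rw [hBoxEq]
    exact (MeasurableEquiv.toLp 2 (Fin m → ℝ)).symm.measurable
      (MeasurableSet.univ_pi fun i => measurableSet_Icc)
  have hvol : volume Box = ENNReal.ofReal ((4 * ρ) ^ (m - 1)) * ENNReal.ofReal (4 * s) := by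
    rw [hBoxEq, (EuclideanSpace.volume_preserving_symm_measurableEquiv_toLp (Fin m)).measure_preimage
      ((MeasurableSet.univ_pi fun i => measurableSet_Icc).nullMeasurableSet)]
    rw [volume_pi_pi]
    have hIccVol : ∀ i, volume (Icc (-(L i)) (L i)) = ENNReal.ofReal (2 * L i) := by
      intro i; rw [Real.volume_Icc]; congr 1; ring
    simp_rw [hIccVol]
    rw [← Finset.mul_prod_erase Finset.univ _ (Finset.mem_univ N)]
    have h2 : ∀ i ∈ Finset.univ.erase N, ENNReal.ofReal (2 * L i) = ENNReal.ofReal (4 * ρ) := by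
      intro i hi
      have hiN : i ≠ N := Finset.ne_of_mem_erase hi
      simp only [hL, if_neg hiN]
      congr 1; ring
    rw [Finset.prod_congr rfl h2, Finset.prod_const]
    have hcard : (Finset.univ.erase N).card = m - 1 := by
      rw [Finset.card_erase_of_mem (Finset.mem_univ N), Finset.card_univ, Fintype.card_fin]
    have hLN : ENNReal.ofReal (2 * L N) = ENNReal.ofReal (4 * s) := by
      simp only [hL, if_pos rfl]; congr 1; ring
    rw [hcard, hLN, ← ENNReal.ofReal_pow (by positivity), mul_comm]
  have hSB : Sbox ⊆ Box := by
    intro x hx i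
    obtain ⟨h1, h2⟩ := hx
    simp only [hL, Set.mem_Icc]
    by_cases hi : i = N
    · subst hi; simp only [if_pos rfl]; exact abs_le.mp h2
    · simp only [if_neg hi]
      exact abs_le.mp ((abs_coord_le_projP N x hi).trans h1)
  -- integral estimate
  set f : E → ℝ := fun x => ‖fderiv ℝ φ x‖ ^ 2 with hf
  have hfc : Continuous f := ((hφdiff.continuous_fderiv one_ne_zero).norm).pow 2
  have hfcs : HasCompactSupport f := by
    apply (hφcs.fderiv (𝕜 := ℝ)).comp_left (g := fun T : E →L[ℝ] ℝ => ‖T‖ ^ 2)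
    simp
  have hInt : Integrable f := hfc.integrable_of_hasCompactSupport hfcs
  set K2 : ℝ := (D1 * (ρ⁻¹ + s⁻¹)) ^ 2 with hK2
  have hK2nn : 0 ≤ K2 := sq_nonneg _
  have hle : ∀ x, f x ≤ Box.indicator (fun _ => K2) x := by
    intro x
    by_cases hx : x ∈ Box
    · rw [Set.indicator_of_mem hx]
      exact pow_le_pow_left₀ (norm_nonneg _) (hfd x) 2
    · rw [Set.indicator_of_notMem hx]
      have hxS : x ∉ Sbox := fun h => hx (hSB h)
      have hxt : x ∉ tsupport φ := fun h => hxS (htsupp h)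
      have hz : fderiv ℝ φ x = 0 := by
        by_contra h
        exact hxt (support_fderiv_subset ℝ (f := φ) h)
      simp [hf, hz]
  have hBoxFin : volume Box < ⊤ := by
    rw [hvol]; exact ENNReal.mul_lt_top ENNReal.ofReal_lt_top ENNReal.ofReal_lt_top
  have hIndInt : Integrable (Box.indicator fun _ => K2) := by
    rw [integrable_indicator_iff hBoxMeas]
    exact integrableOn_const hBoxFin.ne
  have hIle : ∫ x, f x ≤ K2 * ((4 * ρ) ^ (m - 1) * (4 * s)) := by
    calc ∫ x, f x ≤ ∫ x, Box.indicator (fun _ => K2) x := integral_mono hInt hIndInt hle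
      _ = (volume Box).toReal • K2 := integral_indicator_const _ hBoxMeas
      _ = K2 * ((4 * ρ) ^ (m - 1) * (4 * s)) := by
          rw [hvol, ENNReal.toReal_mul, ENNReal.toReal_ofReal (by positivity),
            ENNReal.toReal_ofReal (by positivity), smul_eq_mul]
          ring
  -- conclusion
  set capSet : Set ℝ := {t : ℝ | ∃ ψ : E → ℝ, ContDiff ℝ 1 ψ ∧
    HasCompactSupport ψ ∧ (∀ x ∈ K, 1 ≤ ψ x) ∧ t = ∫ x, ‖fderiv ℝ ψ x‖ ^ 2} with hcapSet
  have hcap : newtonianCap m K = sInf capSet := rfl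
  have hmem : (∫ x, f x) ∈ capSet := ⟨φ, hφdiff, hφcs, hφ1, rfl⟩
  have hbdd : BddBelow capSet := by
    refine ⟨0, ?_⟩
    rintro t ⟨ψ, -, -, -, rfl⟩
    exact integral_nonneg fun x => sq_nonneg _
  constructor
  · rw [hcap]
    exact le_csInf ⟨_, hmem⟩
      (by rintro t ⟨ψ, -, -, -, rfl⟩; exact integral_nonneg fun x => sq_nonneg _)
  · calc newtonianCap m K ≤ ∫ x, f x := hcap ▸ csInf_le hbdd hmem
      _ ≤ K2 * ((4 * ρ) ^ (m - 1) * (4 * s)) := hIle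
      _ = D1 ^ 2 * (4 ^ (m - 1) * 4) * ((ρ⁻¹ + s⁻¹) ^ 2 * (ρ ^ (m - 1) * s)) := by
          rw [hK2, mul_pow, mul_pow]
          ring

end Stmt18Aux

namespace Stmt18Aux

lemma arith (j k : ℕ) (D c b : ℝ) (hD : 0 ≤ D) (hc : 0 < c) (hb : 0 < b) (hb1 : 2 * b ≤ 1) :
    ((2:ℝ) ^ (j+1)) ^ k *
        (D * (((b ^ k / c)⁻¹ + (((2:ℝ)⁻¹) ^ k)⁻¹) ^ 2 * ((b ^ k / c) ^ (j+2) * ((2:ℝ)⁻¹) ^ k)))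
      ≤ (D * (1 + c⁻¹) ^ 2 / c ^ j) * ((2 * b) ^ j) ^ k := by
  set u : ℝ := (2:ℝ) ^ k with hu
  set v : ℝ := b ^ k with hv
  have hu0 : (0:ℝ) < u := by positivity
  have hv0 : (0:ℝ) < v := by positivity
  have e1 : ((2:ℝ)⁻¹) ^ k = u⁻¹ := by rw [inv_pow]
  have e2 : ((2:ℝ) ^ (j+1)) ^ k = u ^ (j+1) := pow_right_comm 2 (j+1) k
  have e3 : ((2 * b) ^ j) ^ k = (u * v) ^ j := by
    rw [pow_right_comm, mul_pow]
  have huv1 : u * v ≤ 1 := by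
    rw [← mul_pow]
    exact pow_le_one₀ (by positivity) hb1
  rw [e1, e2, e3]
  have key : u ^ (j+1) * (D * (((v / c)⁻¹ + (u⁻¹)⁻¹) ^ 2 * ((v / c) ^ (j+2) * u⁻¹)))
      = D * ((1 + u * v / c) ^ 2 / c ^ j) * (u * v) ^ j := by
    field_simp
    have h1 : c ^ 2 * c⁻¹ ^ 2 = 1 := by rw [← mul_pow, mul_inv_cancel₀ hc.ne', one_pow]
    have h2 : c ^ j * c⁻¹ ^ j = 1 := by rw [← mul_pow, mul_inv_cancel₀ hc.ne', one_pow]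
    linear_combination (u * u ^ j * D * v ^ 2 * v ^ j) * (c ^ j * c⁻¹ ^ j * h1 + h2)
  rw [key]
  have h2 : u * v / c ≤ c⁻¹ := by
    rw [← one_div c]
    exact (div_le_div_iff_of_pos_right hc).mpr huv1
  calc D * ((1 + u * v / c) ^ 2 / c ^ j) * (u * v) ^ j
      ≤ D * ((1 + c⁻¹) ^ 2 / c ^ j) * (u * v) ^ j := by gcongr
    _ = D * (1 + c⁻¹) ^ 2 / c ^ j * (u * v) ^ j := by ring

end Stmt18Aux

set_option maxHeartbeats 2000000 in
/-- **Thinness of a closed cusp in `ℂⁿ = ℝ²ⁿ`, `n ≥ 2`.**  For the closed cusp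
`Γ̄ = {z : Im zₙ ≥ C(|z'|² + (Re zₙ)²)^(α/2)}` (realized in `ℝ²ⁿ` with the distinguished
coordinate `x_{2n-1}` playing the role of `Im zₙ`, so that
`|z'|² + (Re zₙ)² = ‖x‖² - x_{2n-1}²`), the Wiener series
`Σ_k 2^{k(2n-2)} Cap(Γ̄ ∩ {2^{-k-1} ≤ |x| ≤ 2^{-k}})` converges, i.e. `Γ̄` is thin at
the vertex `0`. -/
theorem stmt18 (n : ℕ) (hn : 2 ≤ n) (C α : ℝ) (hC : 0 < C) (hα0 : 0 < α) (hα1 : α < 1) :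
    Summable (fun k : ℕ => (2 : ℝ) ^ ((k : ℝ) * (2 * (n : ℝ) - 2)) *
      newtonianCap (2 * n)
        ({x : EuclideanSpace ℝ (Fin (2 * n)) |
            C * (‖x‖ ^ 2 - (x ⟨2 * n - 1, by omega⟩) ^ 2) ^ (α / 2)
              ≤ x ⟨2 * n - 1, by omega⟩} ∩
         {x | (2 : ℝ) ^ (-(k : ℝ) - 1) ≤ ‖x‖ ∧ ‖x‖ ≤ (2 : ℝ) ^ (-(k : ℝ))})) := by
  classical
  open Stmt18Aux in
  have hN : 2 * n - 1 < 2 * n := by omega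
  set N : Fin (2 * n) := ⟨2 * n - 1, hN⟩ with hNdef
  obtain ⟨D, hD0, hD⟩ := Stmt18Aux.exists_D (2 * n) N
  -- constants
  set b : ℝ := (2⁻¹ : ℝ) ^ (α⁻¹ : ℝ) with hb
  have hb0 : 0 < b := Real.rpow_pos_of_pos (by norm_num) _
  have hinv1 : 1 < α⁻¹ := (one_lt_inv₀ hα0).mpr hα1
  have hb2 : 2 * b < 1 := by
    have hlt : b < 2⁻¹ := by
      calc b = (2⁻¹ : ℝ) ^ (α⁻¹ : ℝ) := rfl
        _ < (2⁻¹ : ℝ) ^ (1 : ℝ) :=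
            Real.rpow_lt_rpow_of_exponent_gt (by norm_num) (by norm_num) hinv1
        _ = 2⁻¹ := Real.rpow_one _
    linarith
  set cα : ℝ := C ^ (α⁻¹ : ℝ) with hcα
  have hcα0 : 0 < cα := Real.rpow_pos_of_pos hC _
  set j : ℕ := 2 * n - 3 with hj
  have hj1 : 1 ≤ j := by omega
  -- per-k scales
  have hsk0 : ∀ k : ℕ, (0:ℝ) < ((2:ℝ)⁻¹) ^ k := fun k => by positivity
  have hρk0 : ∀ k : ℕ, (0:ℝ) < b ^ k / cα := fun k => by positivity
  have hskr : ∀ k : ℕ, (2:ℝ) ^ (-(k:ℝ)) = ((2:ℝ)⁻¹) ^ k := by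
    intro k
    rw [Real.rpow_neg (by norm_num), Real.rpow_natCast, ← inv_pow]
  have hρkr : ∀ k : ℕ, (((2:ℝ)⁻¹) ^ k / C) ^ (α⁻¹ : ℝ) = b ^ k / cα := by
    intro k
    rw [Real.div_rpow (by positivity) hC.le]
    congr 1
    rw [← Real.rpow_natCast (2⁻¹:ℝ) k, ← Real.rpow_mul (by norm_num), mul_comm,
      Real.rpow_mul (by norm_num), Real.rpow_natCast]
  -- capacity bounds for each k
  have hcapk : ∀ k : ℕ,
      0 ≤ newtonianCap (2 * n)
          ({x : EuclideanSpace ℝ (Fin (2 * n)) |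
              C * (‖x‖ ^ 2 - (x ⟨2 * n - 1, hN⟩) ^ 2) ^ (α / 2) ≤ x ⟨2 * n - 1, hN⟩} ∩
           {x | (2 : ℝ) ^ (-(k : ℝ) - 1) ≤ ‖x‖ ∧ ‖x‖ ≤ (2 : ℝ) ^ (-(k : ℝ))}) ∧
        newtonianCap (2 * n)
          ({x : EuclideanSpace ℝ (Fin (2 * n)) |
              C * (‖x‖ ^ 2 - (x ⟨2 * n - 1, hN⟩) ^ 2) ^ (α / 2) ≤ x ⟨2 * n - 1, hN⟩} ∩
           {x | (2 : ℝ) ^ (-(k : ℝ) - 1) ≤ ‖x‖ ∧ ‖x‖ ≤ (2 : ℝ) ^ (-(k : ℝ))})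
          ≤ D * (((b ^ k / cα)⁻¹ + (((2:ℝ)⁻¹) ^ k)⁻¹) ^ 2 *
              ((b ^ k / cα) ^ (2 * n - 1) * ((2:ℝ)⁻¹) ^ k)) := by
    intro k
    apply hD (b ^ k / cα) (((2:ℝ)⁻¹) ^ k) (hρk0 k) (hsk0 k)
    rintro x ⟨hx1, hx2, hx3⟩
    have hxn : ‖x‖ ≤ ((2:ℝ)⁻¹) ^ k := by rw [← hskr k]; exact hx3
    have hx1' : C * (‖Stmt18Aux.projP N x‖ ^ 2) ^ (α / 2) ≤ x N := by
      rw [Stmt18Aux.normsq_projP]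
      exact hx1
    have hrw : ((‖Stmt18Aux.projP N x‖ ^ 2 : ℝ)) ^ (α / 2 : ℝ) = ‖Stmt18Aux.projP N x‖ ^ (α : ℝ) := by
      rw [← Real.rpow_natCast ‖Stmt18Aux.projP N x‖ 2, ← Real.rpow_mul (norm_nonneg _)]
      congr 1
      push_cast
      ring
    have hxN0 : 0 ≤ x N :=
      le_trans (mul_nonneg hC.le (Real.rpow_nonneg (by positivity) _)) hx1'
    have hxNle : |x N| ≤ ((2:ℝ)⁻¹) ^ k := (Stmt18Aux.abs_coord_le N x).trans hxn
    refine ⟨?_, hxNle⟩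
    have h5 : C * ‖Stmt18Aux.projP N x‖ ^ (α : ℝ) ≤ ((2:ℝ)⁻¹) ^ k := by
      rw [← hrw]
      exact hx1'.trans ((le_abs_self _).trans hxNle)
    have h6 : ‖Stmt18Aux.projP N x‖ ^ (α : ℝ) ≤ ((2:ℝ)⁻¹) ^ k / C := (le_div_iff₀' hC).mpr h5
    calc ‖Stmt18Aux.projP N x‖
        = (‖Stmt18Aux.projP N x‖ ^ (α : ℝ)) ^ (α⁻¹ : ℝ) :=
          (Real.rpow_rpow_inv (norm_nonneg _) hα0.ne').symm
      _ ≤ (((2:ℝ)⁻¹) ^ k / C) ^ (α⁻¹ : ℝ) :=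
          Real.rpow_le_rpow (Real.rpow_nonneg (norm_nonneg _) _) h6 (by positivity)
      _ = b ^ k / cα := hρkr k
  -- geometric comparison
  have hQ0 : (0:ℝ) ≤ (2 * b) ^ j := by positivity
  have hQ1 : (2 * b) ^ j < 1 := pow_lt_one₀ (by positivity) hb2 (by omega)
  apply Summable.of_nonneg_of_le
    (f := fun k : ℕ => (D * (1 + cα⁻¹) ^ 2 / cα ^ j) * ((2 * b) ^ j) ^ k)
  · intro k
    exact mul_nonneg (Real.rpow_nonneg (by norm_num) _) (hcapk k).1
  · intro k
    have hE : (2:ℝ) ^ ((k:ℝ) * (2 * (n:ℝ) - 2)) = ((2:ℝ) ^ (j+1)) ^ k := by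
      have h1 : (2 * (n:ℝ) - 2) = ((j+1 : ℕ) : ℝ) := by
        have : (j : ℝ) = 2 * (n:ℝ) - 3 := by
          rw [hj]
          rw [Nat.cast_sub (by omega)]
          push_cast
          ring
        push_cast [this]
        ring
      rw [h1]
      rw [show ((k:ℝ) * ((j+1 : ℕ):ℝ)) = ((k * (j+1) : ℕ) : ℝ) by push_cast; ring]
      rw [Real.rpow_natCast, pow_mul, pow_right_comm]
    calc (2:ℝ) ^ ((k:ℝ) * (2 * (n:ℝ) - 2)) * newtonianCap (2 * n) _
        ≤ ((2:ℝ) ^ (j+1)) ^ k *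
            (D * (((b ^ k / cα)⁻¹ + (((2:ℝ)⁻¹) ^ k)⁻¹) ^ 2 *
              ((b ^ k / cα) ^ (j+2) * ((2:ℝ)⁻¹) ^ k))) := by
          rw [← hE]
          apply mul_le_mul_of_nonneg_left _ (Real.rpow_nonneg (by norm_num) _)
          have h21 : 2 * n - 1 = j + 2 := by omega
          have hpow : (b ^ k / cα) ^ (2 * n - 1) = (b ^ k / cα) ^ (j + 2) := by rw [h21]
          have := (hcapk k).2
          rw [hpow] at this
          exact this
      _ ≤ (D * (1 + cα⁻¹) ^ 2 / cα ^ j) * ((2 * b) ^ j) ^ k :=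
          Stmt18Aux.arith j k D cα b hD0 hcα0 hb0 hb2.le
  · exact (summable_geometric_of_lt_one hQ0 hQ1).mul_left _
end
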